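/- arXiv:0712.3507 — 9 statements merged into one kernel-verified Lean document; each statement's English description precedes it below -/
import Mathlib

section
/- Let α = (α_0,...,α_{n-1}), β = (β_0,...,β_{n-1}), γ = (γ_0,...,γ_{n-1}), δ = (δ_0,...,δ_{n-1}) be nonnegative real sequences with neither α nor β identically zero. If γ and δ are (weakly) increasing, γ_i ≥ δ_j whenever i ≥ j, and (Σ α_i γ_i)·(Σ β_i) ≤ (Σ β_i δ_i)·(Σ α_i), then (Σ i α_i)(Σ β_i δ_i) + (Σ i β_i)(Σ α_i γ_i) ≤ (Σ i α_i γ_i)(Σ β_i) + (Σ i β_i δ_i)(Σ α_i). -/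
open Finset

private lemma cert_aux (Ah Bh Ta Tb c d Agh Bdh Agt Bdt : ℝ)
    (hTa : 0 ≤ Ta) (hTb : 0 ≤ Tb) (hAh : 0 ≤ Ah) (hBh : 0 ≤ Bh)
    (hA : 0 < Ta + Ah) (hB : 0 < Tb + Bh)
    (h1 : c * Ta ≤ Agt) (h2 : Agh ≤ c * Ah) (h3 : Bdh ≤ d * Bh) (h4 : d * Tb ≤ Bdt)
    (h5 : d ≤ c)
    (hE : (Agt + Agh) * (Tb + Bh) ≤ (Bdt + Bdh) * (Ta + Ah)) :
    Ta * (Bdt + Bdh) + Tb * (Agt + Agh) ≤ Agt * (Tb + Bh) + Bdt * (Ta + Ah) := by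
  rcases le_total (Tb * (Ta + Ah)) (Ah * (Tb + Bh)) with hc | hc
  · nlinarith [mul_nonneg (sub_nonneg.2 h1) (mul_nonneg (add_nonneg hTb hBh) (add_nonneg hTb hBh)),
      mul_nonneg (sub_nonneg.2 h4) (sub_nonneg.2 hc),
      mul_nonneg (sub_nonneg.2 h3)
        (add_nonneg (mul_nonneg hTa (add_nonneg hTb hBh)) (mul_nonneg hTb (add_nonneg hTa hAh))),
      mul_nonneg (sub_nonneg.2 h5)
        (mul_nonneg hTa (mul_nonneg (add_nonneg hTb hBh) (add_nonneg hTb hBh))),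
      mul_nonneg hTb (sub_nonneg.2 hE), hB]
  · nlinarith [mul_nonneg (sub_nonneg.2 h1)
        (add_nonneg (mul_nonneg (add_nonneg hTa hAh) hBh)
          (mul_nonneg hAh (add_nonneg hTb hBh))),
      mul_nonneg (sub_nonneg.2 h2) (sub_nonneg.2 hc),
      mul_nonneg (sub_nonneg.2 h3)
        (mul_nonneg (add_nonneg hTa hAh) (add_nonneg hTa hAh)),
      mul_nonneg (sub_nonneg.2 h5)
        (mul_nonneg hBh (mul_nonneg (add_nonneg hTa hAh) (add_nonneg hTa hAh))),
      mul_nonneg hAh (sub_nonneg.2 hE), hA]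

private lemma swap_sum (n : ℕ) (x : Fin n → ℝ) :
    ∑ i : Fin n, (i : ℝ) * x i = ∑ t : Fin n, ∑ i ∈ univ.filter (fun i => t < i), x i := by
  have h1 : ∀ t : Fin n, ∑ i ∈ univ.filter (fun i => t < i), x i
      = ∑ i : Fin n, if t < i then x i else 0 := fun t => Finset.sum_filter _ _
  simp only [h1]
  rw [Finset.sum_comm]
  refine Finset.sum_congr rfl fun i _ => ?_
  rw [← Finset.sum_filter, Finset.sum_const, nsmul_eq_mul]
  have h2 : (univ.filter fun t : Fin n => t < i) = Finset.Iio i := by ext a; simp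
  rw [h2, Fin.card_Iio]

theorem stmt_0 (n : ℕ) (α β γ δ : Fin n → ℝ)
    (hα : ∀ i, 0 ≤ α i) (hβ : ∀ i, 0 ≤ β i)
    (hα0 : ∃ i, α i ≠ 0) (hβ0 : ∃ i, β i ≠ 0)
    (hγ : Monotone γ) (hδ : Monotone δ)
    (hγδ : ∀ i j : Fin n, j ≤ i → δ j ≤ γ i)
    (hmain : (∑ i, α i * γ i) * (∑ i, β i) ≤ (∑ i, β i * δ i) * (∑ i, α i)) :
    (∑ i : Fin n, (i : ℝ) * α i) * (∑ i, β i * δ i) + (∑ i : Fin n, (i : ℝ) * β i) * (∑ i, α i * γ i)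
      ≤ (∑ i : Fin n, (i : ℝ) * α i * γ i) * (∑ i, β i) + (∑ i : Fin n, (i : ℝ) * β i * δ i) * (∑ i, α i) := by
  obtain ⟨i0, hi0⟩ := hα0
  obtain ⟨j0, hj0⟩ := hβ0
  have hA : 0 < ∑ i, α i := by
    have h1 : 0 < α i0 := (hα i0).lt_of_ne (Ne.symm hi0)
    have h2 : α i0 ≤ ∑ i, α i := Finset.single_le_sum (fun i _ => hα i) (Finset.mem_univ i0)
    linarith
  have hB : 0 < ∑ i, β i := by
    have h1 : 0 < β j0 := (hβ j0).lt_of_ne (Ne.symm hj0)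
    have h2 : β j0 ≤ ∑ i, β i := Finset.single_le_sum (fun i _ => hβ i) (Finset.mem_univ j0)
    linarith
  have key : ∀ t : Fin n,
      (∑ i ∈ univ.filter (fun i => t < i), α i) * (∑ i, β i * δ i)
        + (∑ i ∈ univ.filter (fun i => t < i), β i) * (∑ i, α i * γ i)
      ≤ (∑ i ∈ univ.filter (fun i => t < i), α i * γ i) * (∑ i, β i)
        + (∑ i ∈ univ.filter (fun i => t < i), β i * δ i) * (∑ i, α i) := by
    intro t
    by_cases ht : (t : ℕ) + 1 < n
    · set t' : Fin n := ⟨(t : ℕ) + 1, ht⟩ with ht'def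
      have hsplitA := Finset.sum_filter_add_sum_filter_not univ (fun i => t < i) α
      have hsplitB := Finset.sum_filter_add_sum_filter_not univ (fun i => t < i) β
      have hsplitAg := Finset.sum_filter_add_sum_filter_not univ (fun i => t < i)
        (fun i => α i * γ i)
      have hsplitBd := Finset.sum_filter_add_sum_filter_not univ (fun i => t < i)
        (fun i => β i * δ i)
      have hE := hmain
      rw [← hsplitA, ← hsplitB, ← hsplitAg, ← hsplitBd] at hE
      rw [← hsplitA] at hA
      rw [← hsplitB] at hB
      rw [← hsplitA, ← hsplitB, ← hsplitAg, ← hsplitBd]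
      have hTa : 0 ≤ ∑ i ∈ univ.filter (fun i => t < i), α i :=
        Finset.sum_nonneg fun i _ => hα i
      have hTb : 0 ≤ ∑ i ∈ univ.filter (fun i => t < i), β i :=
        Finset.sum_nonneg fun i _ => hβ i
      have hAh : 0 ≤ ∑ i ∈ univ.filter (fun i => ¬ t < i), α i :=
        Finset.sum_nonneg fun i _ => hα i
      have hBh : 0 ≤ ∑ i ∈ univ.filter (fun i => ¬ t < i), β i :=
        Finset.sum_nonneg fun i _ => hβ i
      have h1 : γ t' * ∑ i ∈ univ.filter (fun i => t < i), α i
          ≤ ∑ i ∈ univ.filter (fun i => t < i), α i * γ i := by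
        rw [Finset.mul_sum]
        refine Finset.sum_le_sum fun i hi => ?_
        have hti : t < i := (Finset.mem_filter.1 hi).2
        have ht'i : t' ≤ i := by
          rw [Fin.le_def]
          exact Fin.lt_def.1 hti
        rw [mul_comm]
        exact mul_le_mul_of_nonneg_left (hγ ht'i) (hα i)
      have h2 : (∑ i ∈ univ.filter (fun i => ¬ t < i), α i * γ i)
          ≤ γ t' * ∑ i ∈ univ.filter (fun i => ¬ t < i), α i := by
        rw [Finset.mul_sum]
        refine Finset.sum_le_sum fun i hi => ?_
        have hti : i ≤ t := le_of_not_gt (Finset.mem_filter.1 hi).2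
        have hit' : i ≤ t' := by
          rw [Fin.le_def]
          have := Fin.le_def.1 hti
          simp only [ht'def]
          omega
        rw [mul_comm (γ t') (α i)]
        exact mul_le_mul_of_nonneg_left (hγ hit') (hα i)
      have h3 : (∑ i ∈ univ.filter (fun i => ¬ t < i), β i * δ i)
          ≤ δ t * ∑ i ∈ univ.filter (fun i => ¬ t < i), β i := by
        rw [Finset.mul_sum]
        refine Finset.sum_le_sum fun i hi => ?_
        have hti : i ≤ t := le_of_not_gt (Finset.mem_filter.1 hi).2
        rw [mul_comm (δ t) (β i)]
        exact mul_le_mul_of_nonneg_left (hδ hti) (hβ i)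
      have h4 : δ t * ∑ i ∈ univ.filter (fun i => t < i), β i
          ≤ ∑ i ∈ univ.filter (fun i => t < i), β i * δ i := by
        rw [Finset.mul_sum]
        refine Finset.sum_le_sum fun i hi => ?_
        have hti : t < i := (Finset.mem_filter.1 hi).2
        rw [mul_comm]
        exact mul_le_mul_of_nonneg_left (hδ hti.le) (hβ i)
      have h5 : δ t ≤ γ t' := hγδ t' t (by rw [Fin.le_def]; simp [ht'def])
      exact cert_aux _ _ _ _ _ _ _ _ _ _ hTa hTb hAh hBh hA hB h1 h2 h3 h4 h5 hE
    · have hs : univ.filter (fun i => t < i) = ∅ := by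
        refine Finset.filter_eq_empty_iff.2 fun i _ => ?_
        rw [Fin.lt_def]
        have := i.isLt
        omega
      simp [hs]
  rw [swap_sum n α, swap_sum n β]
  have g1 : ∑ i : Fin n, (i : ℝ) * α i * γ i
      = ∑ t : Fin n, ∑ i ∈ univ.filter (fun i => t < i), α i * γ i := by
    simp_rw [mul_assoc]
    exact swap_sum n (fun i => α i * γ i)
  have g2 : ∑ i : Fin n, (i : ℝ) * β i * δ i
      = ∑ t : Fin n, ∑ i ∈ univ.filter (fun i => t < i), β i * δ i := by
    simp_rw [mul_assoc]
    exact swap_sum n (fun i => β i * δ i)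
  rw [g1, g2, Finset.sum_mul, Finset.sum_mul, Finset.sum_mul, Finset.sum_mul,
    ← Finset.sum_add_distrib, ← Finset.sum_add_distrib]
  exact Finset.sum_le_sum fun t _ => key t
end

section
/- Let α, β, γ, δ be nonnegative real sequences indexed by {0,...,n-1} with neither α nor β identically zero, γ and δ weakly increasing, γ_i ≥ δ_j whenever i ≥ j, and (Σ α_i γ_i)/(Σ α_i) ≤ (Σ β_i δ_i)/(Σ β_i). Then for every s ∈ {1,...,n-1}: (Σ_{i≥s} α_i)(Σ β_i δ_i) + (Σ_{i≥s} β_i)(Σ α_i γ_i) ≤ (Σ_{i≥s} α_i γ_i)(Σ β_i) + (Σ_{i≥s} β_i δ_i)(Σ α_i), provided Σ α_i = Σ β_i. -/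
open Finset

private lemma aux_stmt1 (AL aT BL bT AgL agT BdL bdT c d : ℝ)
    (hAL : 0 ≤ AL) (haT : 0 ≤ aT) (hBL : 0 ≤ BL) (hbT : 0 ≤ bT)
    (hnorm : aT + AL = bT + BL)
    (hrat : agT + AgL ≤ bdT + BdL)
    (h1 : AgL ≤ c * AL) (h2 : c * aT ≤ agT) (h3 : BdL ≤ c * BL)
    (h4 : d * bT ≤ bdT) (h5 : d * aT ≤ agT) (h6 : BdL ≤ d * BL) :
    aT * (bdT + BdL) + bT * (agT + AgL) ≤ agT * (bT + BL) + bdT * (aT + AL) := by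
  have h7 : d * bT * (aT + AL) = d * bT * (bT + BL) := by rw [hnorm]
  have h8 : c * AL * (aT + AL) = c * AL * (bT + BL) := by rw [hnorm]
  rcases le_or_gt bT AL with hcase | hcase
  · nlinarith [mul_nonneg (sub_nonneg.2 h4) (sub_nonneg.2 hcase),
      mul_nonneg (sub_nonneg.2 h5) (add_nonneg hbT hBL),
      mul_nonneg (sub_nonneg.2 h6) (add_nonneg hbT haT),
      mul_nonneg hbT (sub_nonneg.2 hrat), h7]
  · nlinarith [mul_nonneg (sub_nonneg.2 h1) (sub_nonneg.2 hcase.le),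
      mul_nonneg (sub_nonneg.2 h2) (add_nonneg hAL hBL),
      mul_nonneg (sub_nonneg.2 h3) (add_nonneg haT hAL),
      mul_nonneg hAL (sub_nonneg.2 hrat), h8]

theorem stmt_1 (n : ℕ) (α β γ δ : Fin n → ℝ)
    (hα : ∀ i, 0 ≤ α i) (hβ : ∀ i, 0 ≤ β i)
    (hα0 : ∃ i, α i ≠ 0) (hβ0 : ∃ i, β i ≠ 0)
    (hγ : Monotone γ) (hδ : Monotone δ)
    (hγδ : ∀ i j : Fin n, j ≤ i → δ j ≤ γ i)
    (hratio : (∑ i, α i * γ i) / (∑ i, α i) ≤ (∑ i, β i * δ i) / (∑ i, β i))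
    (hnorm : (∑ i, α i) = ∑ i, β i)
    (s : ℕ) (hs1 : 1 ≤ s) (hs2 : s ≤ n - 1) :
    (∑ i ∈ univ.filter (fun i : Fin n => s ≤ (i : ℕ)), α i) * (∑ i, β i * δ i)
      + (∑ i ∈ univ.filter (fun i : Fin n => s ≤ (i : ℕ)), β i) * (∑ i, α i * γ i)
    ≤ (∑ i ∈ univ.filter (fun i : Fin n => s ≤ (i : ℕ)), α i * γ i) * (∑ i, β i)
      + (∑ i ∈ univ.filter (fun i : Fin n => s ≤ (i : ℕ)), β i * δ i) * (∑ i, α i) := by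
  obtain ⟨i₂, hi₂⟩ := hα0
  have hn : 0 < n := i₂.pos
  have hsn : s < n := by omega
  have hs0 : s - 1 < n := by omega
  set i₀ : Fin n := ⟨s - 1, hs0⟩ with hi₀def
  set i₁ : Fin n := ⟨s, hsn⟩ with hi₁def
  set c : ℝ := γ i₀ with hcdef
  set d : ℝ := δ i₁ with hddef
  -- positivity of the total sums
  have hA : 0 < ∑ i, α i :=
    Finset.sum_pos' (fun i _ => hα i) ⟨i₂, mem_univ i₂, (hα i₂).lt_of_ne (Ne.symm hi₂)⟩
  have hB : 0 < ∑ i, β i := hnorm ▸ hA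
  -- from the ratio hypothesis: ∑ αγ ≤ ∑ βδ
  have hrat : (∑ i, α i * γ i) ≤ ∑ i, β i * δ i := by
    rw [hnorm] at hratio
    exact (div_le_div_iff_of_pos_right hB).mp hratio
  -- split the sums
  have eA := Finset.sum_filter_add_sum_filter_not univ (fun i : Fin n => s ≤ (i : ℕ)) α
  have eB := Finset.sum_filter_add_sum_filter_not univ (fun i : Fin n => s ≤ (i : ℕ)) β
  have eAg := Finset.sum_filter_add_sum_filter_not univ (fun i : Fin n => s ≤ (i : ℕ))
    (fun i => α i * γ i)
  have eBd := Finset.sum_filter_add_sum_filter_not univ (fun i : Fin n => s ≤ (i : ℕ))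
    (fun i => β i * δ i)
  rw [← eA, ← eB, ← eAg, ← eBd]
  -- bounds on the pieces
  have hmemT : ∀ i : Fin n, i ∈ univ.filter (fun i : Fin n => s ≤ (i : ℕ)) → i₁ ≤ i := by
    intro i hi
    rw [Finset.mem_filter] at hi
    rw [Fin.le_def]
    exact hi.2
  have hmemL : ∀ i : Fin n, i ∈ univ.filter (fun i : Fin n => ¬ s ≤ (i : ℕ)) → i ≤ i₀ := by
    intro i hi
    rw [Finset.mem_filter] at hi
    rw [Fin.le_def]
    have := hi.2
    simp only [not_le] at this
    simp only [hi₀def]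
    omega
  have h1 : (∑ i ∈ univ.filter (fun i : Fin n => ¬ s ≤ (i : ℕ)), α i * γ i)
      ≤ c * ∑ i ∈ univ.filter (fun i : Fin n => ¬ s ≤ (i : ℕ)), α i := by
    rw [Finset.mul_sum]
    refine Finset.sum_le_sum fun i hi => ?_
    rw [mul_comm c (α i)]
    exact mul_le_mul_of_nonneg_left (hγ (hmemL i hi)) (hα i)
  have h2 : c * (∑ i ∈ univ.filter (fun i : Fin n => s ≤ (i : ℕ)), α i)
      ≤ ∑ i ∈ univ.filter (fun i : Fin n => s ≤ (i : ℕ)), α i * γ i := by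
    rw [Finset.mul_sum]
    refine Finset.sum_le_sum fun i hi => ?_
    rw [mul_comm c (α i)]
    refine mul_le_mul_of_nonneg_left (hγ ?_) (hα i)
    rw [Fin.le_def]
    have := hmemT i hi
    rw [Fin.le_def] at this
    simp only [hi₀def, hi₁def] at this ⊢
    omega
  have h3 : (∑ i ∈ univ.filter (fun i : Fin n => ¬ s ≤ (i : ℕ)), β i * δ i)
      ≤ c * ∑ i ∈ univ.filter (fun i : Fin n => ¬ s ≤ (i : ℕ)), β i := by
    rw [Finset.mul_sum]
    refine Finset.sum_le_sum fun i hi => ?_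
    rw [mul_comm c (β i)]
    exact mul_le_mul_of_nonneg_left (hγδ i₀ i (hmemL i hi)) (hβ i)
  have h4 : d * (∑ i ∈ univ.filter (fun i : Fin n => s ≤ (i : ℕ)), β i)
      ≤ ∑ i ∈ univ.filter (fun i : Fin n => s ≤ (i : ℕ)), β i * δ i := by
    rw [Finset.mul_sum]
    refine Finset.sum_le_sum fun i hi => ?_
    rw [mul_comm d (β i)]
    exact mul_le_mul_of_nonneg_left (hδ (hmemT i hi)) (hβ i)
  have h5 : d * (∑ i ∈ univ.filter (fun i : Fin n => s ≤ (i : ℕ)), α i)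
      ≤ ∑ i ∈ univ.filter (fun i : Fin n => s ≤ (i : ℕ)), α i * γ i := by
    rw [Finset.mul_sum]
    refine Finset.sum_le_sum fun i hi => ?_
    rw [mul_comm d (α i)]
    exact mul_le_mul_of_nonneg_left (hγδ i i₁ (hmemT i hi)) (hα i)
  have h6 : (∑ i ∈ univ.filter (fun i : Fin n => ¬ s ≤ (i : ℕ)), β i * δ i)
      ≤ d * ∑ i ∈ univ.filter (fun i : Fin n => ¬ s ≤ (i : ℕ)), β i := by
    rw [Finset.mul_sum]
    refine Finset.sum_le_sum fun i hi => ?_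
    rw [mul_comm d (β i)]
    refine mul_le_mul_of_nonneg_left (hδ ?_) (hβ i)
    have := hmemL i hi
    rw [Fin.le_def] at this ⊢
    simp only [hi₀def, hi₁def] at this ⊢
    omega
  refine aux_stmt1 _ _ _ _ _ _ _ _ c d
    (Finset.sum_nonneg fun i _ => hα i) (Finset.sum_nonneg fun i _ => hα i)
    (Finset.sum_nonneg fun i _ => hβ i) (Finset.sum_nonneg fun i _ => hβ i)
    (by rw [eA, eB, hnorm]) (by rw [eAg, eBd]; exact hrat) h1 h2 h3 h4 h5 h6
end

section
/- The infimum of the function F(u,v) = 1/((1+√(1−v))·u) + 1/((1+√(1−u))·v) over pairs (u,v) with 0 < u ≤ 1 and 0 < v ≤ 1 equals 27/16. -/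
/-!
Each denominator pairs one variable with the square-root factor of the other, but their product is
`g(u) g(v)` with `g(t) = (1 + √(1 - t)) t`. Writing `s = √(1 - t)`, one has
`32/27 - g(t) = (s - 1/3)² (s + 5/3) ≥ 0`, so the product is at most `(32/27)²` and AM-GM bounds
the sum below by `2 · 27/32 = 27/16`, with equality at `u = v = 8/9` (where `s = 1/3`).
-/

open Real

lemma one_add_sqrt_one_sub_mul_le {t : ℝ} (ht : t ≤ 1) : (1 + √(1 - t)) * t ≤ 32 / 27 := by
  have hs : √(1 - t) ^ 2 = 1 - t := sq_sqrt (by linarith)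
  nlinarith [mul_nonneg (sq_nonneg (√(1 - t) - 1 / 3)) (by positivity : (0 : ℝ) ≤ √(1 - t) + 5 / 3)]

lemma two_div_le_inv_add_inv_of_mul_le_sq {a b c : ℝ} (ha : 0 < a) (hb : 0 < b) (hc : 0 < c)
    (habc : a * b ≤ c ^ 2) : 2 / c ≤ 1 / a + 1 / b := by
  rw [div_add_div _ _ ha.ne' hb.ne', div_le_div_iff₀ hc (mul_pos ha hb)]
  nlinarith [sq_nonneg (a - b), sq_nonneg (a + b - 2 * c)]

lemma le_one_div_add_one_div_cross {u v : ℝ} (hu : 0 < u) (hu1 : u ≤ 1) (hv : 0 < v) (hv1 : v ≤ 1) :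
    27 / 16 ≤ 1 / ((1 + √(1 - v)) * u) + 1 / ((1 + √(1 - u)) * v) := by
  have hprod : (1 + √(1 - v)) * u * ((1 + √(1 - u)) * v) ≤ (32 / 27) ^ 2 := by
    rw [show (1 + √(1 - v)) * u * ((1 + √(1 - u)) * v)
        = (1 + √(1 - u)) * u * ((1 + √(1 - v)) * v) by ring, sq]
    exact mul_le_mul (one_add_sqrt_one_sub_mul_le hu1) (one_add_sqrt_one_sub_mul_le hv1)
      (by positivity) (by norm_num)
  convert two_div_le_inv_add_inv_of_mul_le_sq (by positivity) (by positivity) (by norm_num) hprod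
    using 1
  norm_num

theorem stmt_2 :
    IsGLB {x : ℝ | ∃ u v : ℝ, 0 < u ∧ u ≤ 1 ∧ 0 < v ∧ v ≤ 1 ∧
        x = 1 / ((1 + Real.sqrt (1 - v)) * u) + 1 / ((1 + Real.sqrt (1 - u)) * v)}
      (27 / 16) := by
  have hsqrt : √(1 - 8 / 9 : ℝ) = 1 / 3 := by
    rw [show (1 : ℝ) - 8 / 9 = (1 / 3) ^ 2 by norm_num, sqrt_sq (by norm_num)]
  refine IsLeast.isGLB ⟨⟨8 / 9, 8 / 9, by norm_num, by norm_num, by norm_num, by norm_num, ?_⟩, ?_⟩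
  · rw [hsqrt]
    norm_num
  · rintro x ⟨u, v, hu, hu1, hv, hv1, rfl⟩
    exact le_one_div_add_one_div_cross hu hu1 hv hv1
end

section
/- Let k ≥ 2 and 0 < β < 1, and let ν = ν^{k,β} be as defined. Then the rank sequence of ν is ultra-log-concave (equivalently, k² r_k² ≥ (k+1)² r_{k−1} r_{k+1}) if and only if (k+1)β² − 2kβ + (k−1) ≤ 0, i.e. if and only if β ≥ 1 − 2/(k+1). -/
open Finset

/-- The number of coordinates of `η` equal to `true`. -/
def lvl {m : ℕ} (η : Fin m → Bool) : ℕ := (univ.filter fun i => η i = true).card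

/-- Unnormalized weight of the measure `ν^{k,β}` on `{0,1}^{2k}`. -/
def nuWt (k : ℕ) (β : ℝ) (η : Fin (2 * k) → Bool) : ℝ :=
  if h : 0 < 2 * k then
    if lvl η = k - 1 ∧ η ⟨0, h⟩ = true then 1
    else if lvl η = k - 1 then β ^ 2
    else if lvl η = k then β
    else if lvl η = k + 1 ∧ η ⟨0, h⟩ = true then β ^ 2
    else if lvl η = k + 1 then 1
    else 0
  else 0

/-- Rank sequence of `ν^{k,β}` (a probability measure, so we normalize). -/
noncomputable def nuRank (k : ℕ) (β : ℝ) (i : ℕ) : ℝ :=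
  (∑ η : Fin (2 * k) → Bool, if lvl η = i then nuWt k β η else 0) /
    (∑ η : Fin (2 * k) → Bool, nuWt k β η)

/-!
Every configuration of positive weight lies on level `k - 1`, `k` or `k + 1`, and on each of these
levels its weight depends only on its first coordinate. Counting the subsets of a `2k`-set by size
and by whether they contain a fixed point, with `B = C(2k-1, k)` and `A = C(2k-1, k+1)`, the
unnormalized ranks are `r_{k-1} = r_{k+1} = A + B β²` and `r_k = 2 B β`. The normalization cancels,
so ultra-log-concavity at `k` says `(k+1)(A + B β²) ≤ 2 k B β`; since `(k+1) A = (k-1) B` this is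
`B ((k+1) β² - 2 k β + (k-1)) ≤ 0`, and the quadratic factors as `(β - 1)((k+1) β - (k-1))`.
-/

def funBoolEquivFinset (α : Type*) [Fintype α] [DecidableEq α] : (α → Bool) ≃ Finset α where
  toFun η := {i | η i = true}
  invFun s i := decide (i ∈ s)
  left_inv η := by funext i; simp
  right_inv s := by ext i; simp

lemma lvl_decide_mem {n : ℕ} (s : Finset (Fin n)) : lvl (fun i => decide (i ∈ s)) = #s := by
  simp [lvl]

section Counting

variable {α : Type*} [Fintype α] [DecidableEq α]

lemma card_filter_card_eq_and_notMem (a : α) (j : ℕ) :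
    #{s : Finset α | #s = j ∧ a ∉ s} = (Fintype.card α - 1).choose j := by
  have : ({s : Finset α | #s = j ∧ a ∉ s} : Finset (Finset α)) = (univ.erase a).powersetCard j := by
    ext s; simp [mem_powersetCard, subset_erase, and_comm]
  rw [this, card_powersetCard, card_erase_of_mem (mem_univ a), card_univ]

lemma card_filter_card_eq_and_mem (a : α) (j : ℕ) :
    #{s : Finset α | #s = j + 1 ∧ a ∈ s} = (Fintype.card α - 1).choose j := by
  have hsplit := card_filter_add_card_filter_not (s := {s : Finset α | #s = j + 1}) (a ∈ ·)
  have hall : #{s : Finset α | #s = j + 1} = (Fintype.card α).choose (j + 1) := by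
    simp [card_powersetCard]
  have hcard : Fintype.card α = Fintype.card α - 1 + 1 :=
    (Nat.sub_add_cancel (Fintype.card_pos_iff.mpr ⟨a⟩)).symm
  rw [filter_filter, filter_filter, card_filter_card_eq_and_notMem, hall, hcard,
    Nat.choose_succ_succ', Nat.add_sub_cancel] at hsplit
  omega

end Counting

lemma sum_ite_lvl_eq {n : ℕ} (a : Fin n) (j : ℕ) (x y : ℝ) :
    ∑ η : Fin n → Bool, (if lvl η = j + 1 then (if η a then x else y) else 0)
      = (n - 1).choose j * x + (n - 1).choose (j + 1) * y := by
  rw [← (funBoolEquivFinset (Fin n)).symm.sum_comp]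
  simp only [funBoolEquivFinset, Equiv.coe_fn_symm_mk, lvl_decide_mem, decide_eq_true_eq]
  have hsplit (s : Finset (Fin n)) : (if #s = j + 1 then (if a ∈ s then x else y) else 0) =
      (if #s = j + 1 ∧ a ∈ s then x else 0) + (if #s = j + 1 ∧ a ∉ s then y else 0) := by
    by_cases hs : #s = j + 1 <;> by_cases ha : a ∈ s <;> simp [hs, ha]
  rw [sum_congr rfl fun s _ => hsplit s, sum_add_distrib, ← sum_filter, ← sum_filter, sum_const,
    sum_const, card_filter_card_eq_and_mem, card_filter_card_eq_and_notMem, Fintype.card_fin,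
    nsmul_eq_mul, nsmul_eq_mul]

noncomputable def nuMass (k : ℕ) (β : ℝ) (j : ℕ) : ℝ :=
  ∑ η : Fin (2 * k) → Bool, if lvl η = j then nuWt k β η else 0

lemma nuRank_eq_nuMass_div (k : ℕ) (β : ℝ) (i : ℕ) :
    nuRank k β i = nuMass k β i / ∑ η : Fin (2 * k) → Bool, nuWt k β η :=
  rfl

section Weights

variable {k : ℕ} {β : ℝ}

lemma nuWt_of_lvl_eq_sub_one (hk : 1 ≤ k) {η : Fin (2 * k) → Bool} (h : lvl η = k - 1) :
    nuWt k β η = if η ⟨0, by omega⟩ then 1 else β ^ 2 := by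
  simp [nuWt, h, show 0 < 2 * k by omega]

lemma nuWt_of_lvl_eq_self (hk : 1 ≤ k) {η : Fin (2 * k) → Bool} (h : lvl η = k) :
    nuWt k β η = β := by
  simp [nuWt, h, show 0 < 2 * k by omega, show k ≠ k - 1 by omega]

lemma nuWt_of_lvl_eq_add_one (hk : 1 ≤ k) {η : Fin (2 * k) → Bool} (h : lvl η = k + 1) :
    nuWt k β η = if η ⟨0, by omega⟩ then β ^ 2 else 1 := by
  simp [nuWt, h, show 0 < 2 * k by omega, show k + 1 ≠ k - 1 by omega]

lemma nuWt_nonneg (hβ : 0 ≤ β) (η : Fin (2 * k) → Bool) : 0 ≤ nuWt k β η := by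
  unfold nuWt; split_ifs <;> positivity

lemma nuMass_nonneg (hβ : 0 ≤ β) (j : ℕ) : 0 ≤ nuMass k β j :=
  sum_nonneg fun η _ => by split_ifs; exacts [nuWt_nonneg hβ η, le_rfl]

lemma sum_nuWt_pos (hk : 1 ≤ k) (hβ : 0 < β) : 0 < ∑ η : Fin (2 * k) → Bool, nuWt k β η := by
  obtain ⟨t, -, ht⟩ := exists_subset_card_eq (s := (univ : Finset (Fin (2 * k)))) (n := k)
    (by simp; omega)
  refine sum_pos' (fun η _ => nuWt_nonneg hβ.le η) ⟨fun i => decide (i ∈ t), mem_univ _, ?_⟩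
  rwa [nuWt_of_lvl_eq_self hk (by rw [lvl_decide_mem, ht])]

lemma nuMass_eq_sum_of_lvl_eq {j : ℕ} (f : (Fin (2 * k) → Bool) → ℝ)
    (h : ∀ η, lvl η = j → nuWt k β η = f η) :
    nuMass k β j = ∑ η : Fin (2 * k) → Bool, if lvl η = j then f η else 0 :=
  sum_congr rfl fun η _ => by split_ifs with hη; exacts [h η hη, rfl]

lemma nuMass_sub_one (hk : 2 ≤ k) :
    nuMass k β (k - 1) = (2 * k - 1).choose (k - 2) + (2 * k - 1).choose (k - 1) * β ^ 2 := by
  rw [nuMass_eq_sum_of_lvl_eq _ fun η => nuWt_of_lvl_eq_sub_one (by omega),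
    show k - 1 = k - 2 + 1 by omega]
  exact (sum_ite_lvl_eq (⟨0, by omega⟩ : Fin (2 * k)) (k - 2) 1 (β ^ 2)).trans (by rw [mul_one])

lemma nuMass_self (hk : 1 ≤ k) : nuMass k β k = 2 * (2 * k - 1).choose k * β := by
  have h := sum_ite_lvl_eq (⟨0, by omega⟩ : Fin (2 * k)) (k - 1) β β
  rw [Nat.sub_add_cancel hk, Nat.choose_symm_of_eq_add (show 2 * k - 1 = k - 1 + k by omega)] at h
  simp only [ite_self] at h
  rw [nuMass_eq_sum_of_lvl_eq _ fun η => nuWt_of_lvl_eq_self hk, h]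
  ring

lemma nuMass_add_one (hk : 1 ≤ k) :
    nuMass k β (k + 1) = (2 * k - 1).choose k * β ^ 2 + (2 * k - 1).choose (k + 1) := by
  rw [nuMass_eq_sum_of_lvl_eq (fun η => if η ⟨0, by omega⟩ then β ^ 2 else 1)
    fun η => nuWt_of_lvl_eq_add_one hk, sum_ite_lvl_eq, mul_one]

lemma nuMass_sub_one_eq_add_one (hk : 2 ≤ k) : nuMass k β (k - 1) = nuMass k β (k + 1) := by
  rw [nuMass_sub_one hk, nuMass_add_one (by omega),
    Nat.choose_symm_of_eq_add (show 2 * k - 1 = k - 2 + (k + 1) by omega),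
    Nat.choose_symm_of_eq_add (show 2 * k - 1 = k - 1 + k by omega)]
  ring

end Weights

lemma succ_mul_choose_two_mul_sub_one_succ (k : ℕ) :
    (k + 1) * (2 * k - 1).choose (k + 1) = (k - 1) * (2 * k - 1).choose k := by
  rw [mul_comm, Nat.choose_succ_right_eq, show 2 * k - 1 - k = k - 1 by omega, mul_comm]

lemma sq_mul_div_sq_le_iff {Z c m p q : ℝ} (hZ : 0 < Z) (hpc : 0 ≤ p * c) (hqm : 0 ≤ q * m) :
    q ^ 2 * (m / Z) * (m / Z) ≤ p ^ 2 * (c / Z) ^ 2 ↔ q * m ≤ p * c := by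
  rw [show q ^ 2 * (m / Z) * (m / Z) = (q * m / Z) ^ 2 by ring,
    show p ^ 2 * (c / Z) ^ 2 = (p * c / Z) ^ 2 by ring,
    pow_le_pow_iff_left₀ (div_nonneg hqm hZ.le) (div_nonneg hpc hZ.le) two_ne_zero,
    div_le_div_iff_of_pos_right hZ]

lemma quadratic_nonpos_iff {a β : ℝ} (ha : 0 < a + 1) (hβ : β < 1) :
    (a + 1) * β ^ 2 - 2 * a * β + (a - 1) ≤ 0 ↔ 1 - 2 / (a + 1) ≤ β := by
  have hfactor : (a + 1) * β ^ 2 - 2 * a * β + (a - 1) = (1 - β) * ((a - 1) - (a + 1) * β) := by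
    ring
  have hβ' : 0 < 1 - β := sub_pos.2 hβ
  rw [hfactor, one_sub_div ha.ne', div_le_iff₀ ha]
  constructor <;> intro h <;> nlinarith

lemma nuMass_succ_mul_le_iff {k : ℕ} {β : ℝ} (hk : 2 ≤ k) :
    ((k : ℝ) + 1) * nuMass k β (k + 1) ≤ k * nuMass k β k ↔
      ((k : ℝ) + 1) * β ^ 2 - 2 * (k : ℝ) * β + ((k : ℝ) - 1) ≤ 0 := by
  have hB : (0 : ℝ) < (2 * k - 1).choose k := by exact_mod_cast Nat.choose_pos (by omega)
  have hrel := congrArg (Nat.cast (R := ℝ)) (succ_mul_choose_two_mul_sub_one_succ k)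
  push_cast [Nat.cast_sub (by omega : 1 ≤ k)] at hrel
  rw [nuMass_add_one (by omega), nuMass_self (by omega), ← sub_nonpos,
    show ((k : ℝ) + 1) * ((2 * k - 1).choose k * β ^ 2 + (2 * k - 1).choose (k + 1))
        - k * (2 * (2 * k - 1).choose k * β)
        = (2 * k - 1).choose k * (((k : ℝ) + 1) * β ^ 2 - 2 * (k : ℝ) * β + ((k : ℝ) - 1)) by
      linear_combination hrel]
  exact ⟨fun h => nonpos_of_mul_nonpos_right h hB, mul_nonpos_of_nonneg_of_nonpos hB.le⟩

theorem stmt_6 (k : ℕ) (hk : 2 ≤ k) (β : ℝ) (hβ0 : 0 < β) (hβ1 : β < 1) :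
    ((k : ℝ) ^ 2 * (nuRank k β k) ^ 2 ≥
        ((k : ℝ) + 1) ^ 2 * nuRank k β (k - 1) * nuRank k β (k + 1) ↔
      ((k : ℝ) + 1) * β ^ 2 - 2 * (k : ℝ) * β + ((k : ℝ) - 1) ≤ 0) ∧
    ((k : ℝ) ^ 2 * (nuRank k β k) ^ 2 ≥
        ((k : ℝ) + 1) ^ 2 * nuRank k β (k - 1) * nuRank k β (k + 1) ↔
      1 - 2 / ((k : ℝ) + 1) ≤ β) := by
  simp only [nuRank_eq_nuMass_div, nuMass_sub_one_eq_add_one hk, ge_iff_le]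
  rw [sq_mul_div_sq_le_iff (sum_nuWt_pos (by omega) hβ0)
      (mul_nonneg k.cast_nonneg (nuMass_nonneg hβ0.le k))
      (mul_nonneg (by positivity) (nuMass_nonneg hβ0.le (k + 1))),
    nuMass_succ_mul_le_iff hk]
  exact ⟨Iff.rfl, quadratic_nonpos_iff (by positivity) hβ1⟩
end

section
/- Let μ be a nonnegative measure on subsets of {1,...,n} for n ∈ {4,5}, α_X = μ(X), satisfying α_i α_{ijl} ≤ α_{ij} α_{il} for all distinct i, j, l. Then Σ_{1,3}^1 ≤ Σ_{2,2}^1, where Σ_{r,s}^t = Σ α_X α_Y over unordered pairs {X,Y} with |X|=r, |Y|=s, |X∩Y|=t. -/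
open Finset

/-- `Σ_{1,3}^t`: sum of `α X * α Y` over pairs with `|X| = 1`, `|Y| = 3`, `|X ∩ Y| = t`
(each such unordered pair arises from exactly one ordered pair since the sizes differ). -/
def S13 (n : ℕ) (α : Finset (Fin n) → ℝ) (t : ℕ) : ℝ :=
  ∑ X : Finset (Fin n), ∑ Y : Finset (Fin n),
    if X.card = 1 ∧ Y.card = 3 ∧ (X ∩ Y).card = t then α X * α Y else 0

/-- `Σ_{2,2}^t`: sum of `α X * α Y` over unordered pairs of 2-sets with `|X ∩ Y| = t`;
for `t = 2` this is `∑_{|X|=2} α X ^ 2`, otherwise half the ordered sum. -/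
noncomputable def S22 (n : ℕ) (α : Finset (Fin n) → ℝ) (t : ℕ) : ℝ :=
  if t = 2 then ∑ X : Finset (Fin n), (if X.card = 2 then α X ^ 2 else 0)
  else (∑ X : Finset (Fin n), ∑ Y : Finset (Fin n),
    if X.card = 2 ∧ Y.card = 2 ∧ (X ∩ Y).card = t then α X * α Y else 0) / 2

/-! Both sums are indexed by the cherries `(i, j, l)` with `i ∉ {j, l}` and `j < l`: the pair
`({i}, {i, j, l})` of `Σ_{1,3}^1` and the unordered pair `{{i, j}, {i, l}}` of `Σ_{2,2}^1` each
correspond to exactly one cherry, so the inequality is the sum over all cherries of the hypothesis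
`α_i α_{ijl} ≤ α_{ij} α_{il}`. -/

namespace Finset

section Order

variable {ι : Type*} [LinearOrder ι]

theorem exists_lt_and_eq_pair_of_card_eq_two {s : Finset ι} (hs : #s = 2) :
    ∃ j l, j < l ∧ s = {j, l} := by
  obtain ⟨j, l, hjl, rfl⟩ := card_eq_two.mp hs
  rcases hjl.lt_or_gt with hlt | hgt
  · exact ⟨j, l, hlt, rfl⟩
  · exact ⟨l, j, hgt, pair_comm j l⟩

theorem eq_and_eq_of_pair_eq_pair_of_lt {j l j' l' : ι} (h : ({j, l} : Finset ι) = {j', l'})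
    (hjl : j < l) (hjl' : j' < l') : j = j' ∧ l = l' := by
  have hset := congrArg ((↑) : Finset ι → Set ι) h
  push_cast at hset
  rcases Set.pair_eq_pair_iff.mp hset with hsame | ⟨rfl, rfl⟩
  · exact hsame
  · exact absurd hjl' (lt_asymm hjl)

theorem exists_lt_and_eq_insert_pair_of_mem {Y : Finset ι} {i : ι} (hi : i ∈ Y)
    (hY : #Y = 3) : ∃ j l, i ≠ j ∧ i ≠ l ∧ j < l ∧ Y = {i, j, l} := by
  obtain ⟨j, l, hjl, hpair⟩ :=
    exists_lt_and_eq_pair_of_card_eq_two (by rw [card_erase_of_mem hi, hY] : #(Y.erase i) = 2)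
  have hj : j ∈ Y.erase i := by simp [hpair]
  have hl : l ∈ Y.erase i := by simp [hpair]
  exact ⟨j, l, (ne_of_mem_erase hj).symm, (ne_of_mem_erase hl).symm, hjl,
    by rw [← insert_erase hi, hpair]⟩

end Order

variable {ι : Type*} [DecidableEq ι]

theorem exists_ne_and_eq_pair_of_mem {A : Finset ι} {i : ι} (hi : i ∈ A) (hA : #A = 2) :
    ∃ j, i ≠ j ∧ A = {i, j} := by
  obtain ⟨j, hj⟩ := card_eq_one.mp (by rw [card_erase_of_mem hi, hA] : #(A.erase i) = 1)
  have hji : j ∈ A.erase i := hj ▸ mem_singleton_self j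
  exact ⟨j, (ne_of_mem_erase hji).symm, by rw [← insert_erase hi, hj]⟩

theorem pair_inter_pair_of_ne {i j l : ι} (hjl : j ≠ l) : ({i, j} : Finset ι) ∩ {i, l} = {i} := by
  rw [← insert_inter_distrib, singleton_inter_of_notMem (by simpa using hjl), insert_empty]

end Finset

section Triples

variable {ι : Type*} [Fintype ι] {M : Type*} [AddCommMonoid M]

def distinctTriples [DecidableEq ι] : Finset (ι × ι × ι) :=
  {t | t.1 ≠ t.2.1 ∧ t.1 ≠ t.2.2 ∧ t.2.1 ≠ t.2.2}

def cherries [LinearOrder ι] : Finset (ι × ι × ι) :=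
  {t | t.1 ≠ t.2.1 ∧ t.1 ≠ t.2.2 ∧ t.2.1 < t.2.2}

@[simp]
theorem mem_distinctTriples [DecidableEq ι] {i j l : ι} :
    (i, j, l) ∈ distinctTriples ↔ i ≠ j ∧ i ≠ l ∧ j ≠ l := by
  simp [distinctTriples]

@[simp]
theorem mem_cherries [LinearOrder ι] {i j l : ι} :
    (i, j, l) ∈ cherries ↔ i ≠ j ∧ i ≠ l ∧ j < l := by
  simp [cherries]

theorem sum_distinctTriples_eq_sum_cherries [LinearOrder ι] (g : ι → ι → ι → M) :
    ∑ t ∈ distinctTriples, g t.1 t.2.1 t.2.2 =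
      ∑ t ∈ cherries, (g t.1 t.2.1 t.2.2 + g t.1 t.2.2 t.2.1) := by
  rw [sum_add_distrib, ← sum_filter_add_sum_filter_not distinctTriples (fun t => t.2.1 < t.2.2)]
  congr 1
  · congr 1
    ext ⟨i, j, l⟩
    simp only [mem_filter, mem_distinctTriples, mem_cherries]
    grind
  · refine sum_nbij' (fun t => (t.1, t.2.2, t.2.1)) (fun t => (t.1, t.2.2, t.2.1)) ?_ ?_
      (fun _ _ => rfl) (fun _ _ => rfl) (fun _ _ => rfl) <;>
    · rintro ⟨i, j, l⟩ h
      simp only [mem_filter, mem_distinctTriples, mem_cherries] at h ⊢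
      grind

theorem sum_card_one_card_three_eq_sum_cherries [LinearOrder ι] (f : Finset ι → Finset ι → M) :
    (∑ X : Finset ι, ∑ Y : Finset ι, if #X = 1 ∧ #Y = 3 ∧ #(X ∩ Y) = 1 then f X Y else 0) =
      ∑ t ∈ cherries, f {t.1} {t.1, t.2.1, t.2.2} := by
  rw [← sum_product', ← sum_filter]
  symm
  refine sum_nbij (fun t => ({t.1}, {t.1, t.2.1, t.2.2})) ?_ ?_ ?_ (fun _ _ => rfl)
  · rintro ⟨i, j, l⟩ h
    obtain ⟨hij, hil, hjl⟩ := mem_cherries.mp h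
    refine mem_filter.mpr ⟨mem_univ _, card_singleton i,
      card_eq_three.mpr ⟨i, j, l, hij, hil, hjl.ne, rfl⟩, ?_⟩
    rw [singleton_inter_of_mem (mem_insert_self _ _), card_singleton]
  · rintro ⟨i, j, l⟩ h ⟨i', j', l'⟩ h' heq
    obtain ⟨hij, hil, hjl⟩ := mem_cherries.mp h
    obtain ⟨hij', hil', hjl'⟩ := mem_cherries.mp h'
    obtain ⟨hX, hY⟩ := Prod.mk.inj heq
    obtain rfl := singleton_injective hX
    obtain ⟨rfl, rfl⟩ := eq_and_eq_of_pair_eq_pair_of_lt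
      (insert_erase_invOn.2.injOn (by simp [hij, hil]) (by simp [hij', hil']) hY) hjl hjl'
    rfl
  · rintro ⟨X, Y⟩ h
    obtain ⟨-, hX, hY, hXY⟩ := mem_filter.mp h
    obtain ⟨i, rfl⟩ := card_eq_one.mp hX
    have hi : i ∈ Y := by
      by_contra hi
      rw [singleton_inter_of_notMem hi, card_empty] at hXY
      exact zero_ne_one hXY
    obtain ⟨j, l, hij, hil, hjl, rfl⟩ := exists_lt_and_eq_insert_pair_of_mem hi hY
    exact ⟨(i, j, l), mem_cherries.mpr ⟨hij, hil, hjl⟩, rfl⟩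

theorem sum_card_two_card_two_eq_sum_distinctTriples [DecidableEq ι]
    (f : Finset ι → Finset ι → M) :
    (∑ X : Finset ι, ∑ Y : Finset ι, if #X = 2 ∧ #Y = 2 ∧ #(X ∩ Y) = 1 then f X Y else 0) =
      ∑ t ∈ distinctTriples, f {t.1, t.2.1} {t.1, t.2.2} := by
  rw [← sum_product', ← sum_filter]
  symm
  refine sum_nbij (fun t => ({t.1, t.2.1}, {t.1, t.2.2})) ?_ ?_ ?_ (fun _ _ => rfl)
  · rintro ⟨i, j, l⟩ h
    obtain ⟨hij, hil, hjl⟩ := mem_distinctTriples.mp h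
    refine mem_filter.mpr ⟨mem_univ _, card_pair hij, card_pair hil, ?_⟩
    rw [pair_inter_pair_of_ne hjl, card_singleton]
  · rintro ⟨i, j, l⟩ h ⟨i', j', l'⟩ h' heq
    obtain ⟨hij, hil, hjl⟩ := mem_distinctTriples.mp h
    obtain ⟨hij', hil', hjl'⟩ := mem_distinctTriples.mp h'
    obtain ⟨hX, hY⟩ := Prod.mk.inj heq
    obtain rfl : i = i' := singleton_injective <| by
      rw [← pair_inter_pair_of_ne hjl, hX, hY, pair_inter_pair_of_ne hjl']
    obtain rfl : j = j' := singleton_injective <|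
      insert_erase_invOn.2.injOn (by simpa using hij) (by simpa using hij') hX
    obtain rfl : l = l' := singleton_injective <|
      insert_erase_invOn.2.injOn (by simpa using hil) (by simpa using hil') hY
    rfl
  · rintro ⟨X, Y⟩ h
    obtain ⟨-, hX, hY, hXY⟩ := mem_filter.mp h
    obtain ⟨i, hXYi⟩ := card_eq_one.mp hXY
    obtain ⟨hiX, hiY⟩ := mem_inter.mp (hXYi ▸ mem_singleton_self i)
    obtain ⟨j, hij, rfl⟩ := exists_ne_and_eq_pair_of_mem hiX hX
    obtain ⟨l, hil, rfl⟩ := exists_ne_and_eq_pair_of_mem hiY hY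
    have hjl : j ≠ l := by
      rintro rfl
      rw [inter_self, card_pair hij] at hXY
      exact absurd hXY (by decide)
    exact ⟨(i, j, l), mem_distinctTriples.mpr ⟨hij, hil, hjl⟩, rfl⟩

end Triples

theorem stmt_11_general (n : ℕ) (α : Finset (Fin n) → ℝ)
    (h : ∀ i j l : Fin n, i ≠ j → i ≠ l → j ≠ l →
      α {i} * α {i, j, l} ≤ α {i, j} * α {i, l}) :
    S13 n α 1 ≤ S22 n α 1 := by
  have hS13 : S13 n α 1 = ∑ t ∈ cherries, α {t.1} * α {t.1, t.2.1, t.2.2} :=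
    sum_card_one_card_three_eq_sum_cherries fun X Y => α X * α Y
  have hS22 : S22 n α 1 = ∑ t ∈ cherries, α {t.1, t.2.1} * α {t.1, t.2.2} := by
    rw [S22, if_neg (by decide : (1 : ℕ) ≠ 2),
      sum_card_two_card_two_eq_sum_distinctTriples fun X Y => α X * α Y,
      sum_distinctTriples_eq_sum_cherries fun i j l => α {i, j} * α {i, l},
      div_eq_iff two_ne_zero, sum_mul]
    exact sum_congr rfl fun _ _ => by ring
  rw [hS13, hS22]
  refine sum_le_sum fun t ht => ?_
  obtain ⟨hij, hil, hjl⟩ := mem_cherries.mp ht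
  exact h _ _ _ hij hil hjl.ne

theorem stmt_11 (n : ℕ) (hn : n = 4 ∨ n = 5) (α : Finset (Fin n) → ℝ)
    (hα : ∀ X, 0 ≤ α X)
    (h : ∀ i j l : Fin n, i ≠ j → i ≠ l → j ≠ l →
      α {i} * α {i, j, l} ≤ α {i, j} * α {i, l}) :
    S13 n α 1 ≤ S22 n α 1 :=
  stmt_11_general n α h
end

section
/- Consider three balls thrown independently and uniformly according to the distribution p(0) = ε, p(1) = ... = p(n) = (1−ε)/n over urns 0,...,n, and let a_k be the probability that exactly k urns are occupied. Then a_2² < a_1 a_3 whenever ε is sufficiently small and n ε^{3/2} is sufficiently large; in particular, there exist ε ∈ (0,1) and n such that the sequence (a_1, a_2, a_3) is not log-concave. -/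
/-!
Write `S_m = ∑ j, p j ^ m` for the power sums of the ball distribution, so `S_1 = 1`.
Inclusion–exclusion over the coincidences among the three balls gives `a_1 = S_3`,
`a_2 = 3 (S_2 - S_3)` and `a_3 = 1 - 3 S_2 + 2 S_3`. Hence `a_2 ^ 2 ≤ 9 S_2 ^ 2`, while
`a_1 a_3 ≥ S_3 (1 - 3 S_2)` with `S_3 ≥ ε ^ 3`: log-concavity fails as soon as the collision
probability `S_2 = ε ^ 2 + (1 - ε) ^ 2 / n` is small against `ε ^ (3/2)`, which is what
`ε` small and `n ε ^ (3/2)` large guarantee.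
-/

open Finset

/-- Probability that a single ball lands in urn `j`: urn `0` gets `ε`,
each of urns `1,...,n` gets `(1-ε)/n`. -/
noncomputable def urnP (n : ℕ) (ε : ℝ) (j : Fin (n + 1)) : ℝ :=
  if j = 0 then ε else (1 - ε) / n

/-- `a_k`: probability that exactly `k` urns are occupied when three i.i.d. balls
are thrown according to `urnP n ε`. -/
noncomputable def urnA (n : ℕ) (ε : ℝ) (k : ℕ) : ℝ :=
  ∑ σ : Fin 3 → Fin (n + 1),
    if (univ.image σ).card = k then ∏ b, urnP n ε (σ b) else 0

theorem Fintype.sum_pi_fin_succ {X M : Type*} [Fintype X] [AddCommMonoid M] {k : ℕ}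
    (g : (Fin (k + 1) → X) → M) :
    ∑ σ, g σ = ∑ a, ∑ τ : Fin k → X, g (Fin.cons a τ) := by
  rw [← Fintype.sum_prod_type']
  exact (Fintype.sum_equiv (Fin.consEquiv fun _ => X) _ _ fun _ => rfl).symm

theorem Fintype.sum_pi_fin_three {X M : Type*} [Fintype X] [AddCommMonoid M]
    (g : (Fin 3 → X) → M) :
    ∑ σ, g σ = ∑ a, ∑ b, ∑ c, g ![a, b, c] := by
  simp only [Fintype.sum_pi_fin_succ, Fintype.sum_unique]
  rfl

namespace Finset
variable {X : Type*} [DecidableEq X] (a b c : X)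

theorem image_univ_vecCons_three : univ.image ![a, b, c] = {a, b, c} := by
  simp [Fin.univ_succ, image_insert]

theorem card_triple_eq_one_iff : #{a, b, c} = 1 ↔ b = a ∧ c = a := by
  by_cases hab : a = b <;> by_cases hac : a = c <;> by_cases hbc : b = c <;> simp [*, eq_comm]

end Finset

section Occupancy
variable {X R : Type*} [Fintype X] [DecidableEq X]

def threeBallOccupancy [CommSemiring R] (p : X → R) (k : ℕ) : R :=
  ∑ σ : Fin 3 → X, if #(univ.image σ) = k then ∏ b, p (σ b) else 0

theorem threeBallOccupancy_eq_sum [CommSemiring R] (p : X → R) (k : ℕ) :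
    threeBallOccupancy p k =
      ∑ a, ∑ b, ∑ c, if #{a, b, c} = k then p a * p b * p c else 0 := by
  simp only [threeBallOccupancy, Fintype.sum_pi_fin_three, image_univ_vecCons_three,
    Fin.prod_univ_three]
  rfl

theorem threeBallOccupancy_one [CommSemiring R] (p : X → R) :
    threeBallOccupancy p 1 = ∑ a, p a ^ 3 := by
  simp [threeBallOccupancy_eq_sum, card_triple_eq_one_iff, ite_and, pow_succ]

theorem threeBallOccupancy_three [CommRing R] (p : X → R) :
    threeBallOccupancy p 3 =
      (∑ a, p a) ^ 3 - 3 * (∑ a, p a ^ 2) * ∑ a, p a + 2 * ∑ a, p a ^ 3 := by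
  have incl_excl : ∀ a b c : X, (if a ≠ b ∧ a ≠ c ∧ b ≠ c then p a * p b * p c else 0) =
      p a * p b * p c - (if b = a then p a ^ 2 * p c else 0)
        - (if c = a then p a ^ 2 * p b else 0) - (if c = b then p b ^ 2 * p a else 0)
        + 2 * (if b = a then if c = a then p a ^ 3 else 0 else 0) := by
    intro a b c
    by_cases hab : b = a <;> by_cases hac : c = a <;> by_cases hbc : c = b <;>
      simp_all [eq_comm] <;> ring
  simp only [threeBallOccupancy_eq_sum, card_triple_eq_three_iff, incl_excl,
    sum_add_distrib, sum_sub_distrib, sum_ite_irrel, sum_const_zero, sum_ite_eq',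
    mem_univ, if_true, ← mul_sum, ← sum_mul]
  ring

theorem threeBallOccupancy_one_add_two_add_three [CommSemiring R] (p : X → R) :
    threeBallOccupancy p 1 + threeBallOccupancy p 2 + threeBallOccupancy p 3 =
      (∑ a, p a) ^ 3 := by
  simp only [threeBallOccupancy, ← sum_add_distrib, Fintype.sum_pow]
  refine sum_congr rfl fun σ _ => ?_
  have hpos : 0 < #(univ.image σ) := by simp
  have hle : #(univ.image σ) ≤ 3 := card_image_le.trans_eq (card_fin 3)
  interval_cases #(univ.image σ) <;> simp

theorem threeBallOccupancy_two [CommRing R] (p : X → R) :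
    threeBallOccupancy p 2 = 3 * (∑ a, p a ^ 2) * ∑ a, p a - 3 * ∑ a, p a ^ 3 := by
  linear_combination threeBallOccupancy_one_add_two_add_three p -
    threeBallOccupancy_one p - threeBallOccupancy_three p

theorem threeBallOccupancy_nonneg [CommSemiring R] [PartialOrder R] [IsOrderedRing R]
    {p : X → R} (hp : ∀ x, 0 ≤ p x) (k : ℕ) : 0 ≤ threeBallOccupancy p k :=
  sum_nonneg fun _ _ => by split_ifs; exacts [prod_nonneg fun _ _ => hp _, le_rfl]

theorem threeBallOccupancy_two_sq_lt {p : X → ℝ} (hp : ∀ x, 0 ≤ p x) (hsum : ∑ x, p x = 1)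
    (hcoll : ∑ x, p x ^ 2 ≤ 1 / 6) (hcoll' : 18 * (∑ x, p x ^ 2) ^ 2 < ∑ x, p x ^ 3) :
    threeBallOccupancy p 2 ^ 2 < threeBallOccupancy p 1 * threeBallOccupancy p 3 := by
  have ha₂ := threeBallOccupancy_nonneg hp 2
  rw [threeBallOccupancy_two, hsum] at ha₂ ⊢
  rw [threeBallOccupancy_one, threeBallOccupancy_three, hsum]
  have hcube : 0 ≤ ∑ x, p x ^ 3 := sum_nonneg fun x _ => pow_nonneg (hp x) 3
  nlinarith

end Occupancy

theorem urnA_eq_threeBallOccupancy (n : ℕ) (ε : ℝ) (k : ℕ) :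
    urnA n ε k = threeBallOccupancy (urnP n ε) k := rfl

theorem urnP_nonneg {n : ℕ} {ε : ℝ} (hε₀ : 0 ≤ ε) (hε₁ : ε ≤ 1) (j : Fin (n + 1)) :
    0 ≤ urnP n ε j := by
  unfold urnP
  split_ifs
  exacts [hε₀, div_nonneg (sub_nonneg.2 hε₁) n.cast_nonneg]

theorem sum_urnP_pow (n : ℕ) (ε : ℝ) (m : ℕ) :
    ∑ j, urnP n ε j ^ m = ε ^ m + n * ((1 - ε) / n) ^ m := by
  simp [Fin.sum_univ_succ, urnP, Fin.succ_ne_zero]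

theorem sum_urnP {n : ℕ} (hn : n ≠ 0) (ε : ℝ) : ∑ j, urnP n ε j = 1 := by
  have h := sum_urnP_pow n ε 1
  simp only [pow_one] at h
  rw [h]
  field_simp
  ring

theorem urnA_two_sq_lt {n : ℕ} {ε : ℝ} (hε : 0 < ε) (hε_small : ε < 1 / 100)
    (hn : 20 < n * ε ^ ((3 : ℝ) / 2)) : urnA n ε 2 ^ 2 < urnA n ε 1 * urnA n ε 3 := by
  obtain ⟨s, hs, rfl⟩ : ∃ s : ℝ, 0 < s ∧ s ^ 2 = ε := ⟨√ε, Real.sqrt_pos.2 hε, Real.sq_sqrt hε.le⟩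
  have hs₁ : s < 1 / 10 := by nlinarith
  rw [Real.rpow_div_two_eq_sqrt _ (by positivity), Real.sqrt_sq hs.le] at hn
  norm_cast at hn
  have hn₀ : (0 : ℝ) < n := by nlinarith [pow_pos hs 3]
  have hcoll : ∑ j, urnP n (s ^ 2) j ^ 2 < 3 / 20 * s ^ 3 := by
    have hinv : 1 / (n : ℝ) < s ^ 3 / 20 := by
      rw [div_lt_div_iff₀ hn₀ (by norm_num)]; linarith
    have hrest : (n : ℝ) * ((1 - s ^ 2) / n) ^ 2 ≤ 1 / n := calc
      (n : ℝ) * ((1 - s ^ 2) / n) ^ 2 = (1 - s ^ 2) ^ 2 / n := by field_simp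
      _ ≤ 1 / (n : ℝ) := by gcongr; nlinarith
    rw [sum_urnP_pow]
    nlinarith
  have hcube : (s ^ 2) ^ 3 ≤ ∑ j, urnP n (s ^ 2) j ^ 3 := by
    rw [sum_urnP_pow]
    exact le_add_of_nonneg_right <|
      mul_nonneg n.cast_nonneg (pow_nonneg (div_nonneg (by nlinarith) n.cast_nonneg) 3)
  simp only [urnA_eq_threeBallOccupancy]
  apply threeBallOccupancy_two_sq_lt (urnP_nonneg (by positivity) (by nlinarith))
    (sum_urnP (Nat.cast_ne_zero.1 hn₀.ne') _)
  · nlinarith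
  · have hsq := pow_lt_pow_left₀ hcoll
      (sum_nonneg fun j _ => sq_nonneg (urnP n (s ^ 2) j)) two_ne_zero
    nlinarith

theorem stmt_14 :
    (∃ ε₀ C : ℝ, 0 < ε₀ ∧ ∀ (n : ℕ) (ε : ℝ), 0 < ε → ε < ε₀ →
        C < (n : ℝ) * ε ^ ((3 : ℝ) / 2) →
        (urnA n ε 2) ^ 2 < urnA n ε 1 * urnA n ε 3) ∧
    ∃ (n : ℕ) (ε : ℝ), 0 < ε ∧ ε < 1 ∧
      (urnA n ε 2) ^ 2 < urnA n ε 1 * urnA n ε 3 := by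
  refine ⟨⟨1 / 100, 20, by norm_num, fun n ε hε hε₀ hn => urnA_two_sq_lt hε hε₀ hn⟩, ?_⟩
  obtain ⟨n, hn⟩ := exists_nat_gt (20 / (1 / 200 : ℝ) ^ ((3 : ℝ) / 2))
  rw [div_lt_iff₀ (by positivity)] at hn
  exact ⟨n, 1 / 200, by norm_num, by norm_num, urnA_two_sq_lt (by norm_num) (by norm_num) hn⟩
end

section
/- Consider two balls thrown independently into urns 0, 1, 2 with p(1) = p(2) = ε and p(0) = 1 − 2ε, let X_i be the indicator that urn i is occupied, and impose the external field (ε, 1, 1) on the law μ of (X_0, X_1, X_2) (i.e., reweight μ(η) proportionally to ε^{η_0}). Then for ε sufficiently small, X_1 and X_2 are strictly positively correlated under the reweighted measure: the unnormalized weights satisfy w(X_1=1, X_2=1)·w(X_1=0, X_2=0) > w(X_1=1, X_2=0)·w(X_1=0, X_2=1), where w(X_1=1,X_2=1) ∝ 2ε², w(X_1=0,X_2=0) ∝ (1−2ε)²ε, and w(X_1=1,X_2=0) = w(X_1=0,X_2=1) ∝ ε² + 2ε²(1−2ε). -/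
theorem stmt_15 :
    ∃ ε₀ : ℝ, 0 < ε₀ ∧ ∀ ε : ℝ, 0 < ε → ε < ε₀ →
      (ε ^ 2 + 2 * ε ^ 2 * (1 - 2 * ε)) * (ε ^ 2 + 2 * ε ^ 2 * (1 - 2 * ε))
        < (2 * ε ^ 2) * ((1 - 2 * ε) ^ 2 * ε) := by
  refine ⟨1 / 10, by norm_num, fun ε hε hε₀ => ?_⟩
  -- Both sides are `ε ^ 3` times a cofactor; the left cofactor vanishes at `ε = 0`, the right one is `2`.
  have cofactor_lt : ε * (3 - 4 * ε) ^ 2 < 2 * (1 - 2 * ε) ^ 2 := by nlinarith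
  calc (ε ^ 2 + 2 * ε ^ 2 * (1 - 2 * ε)) * (ε ^ 2 + 2 * ε ^ 2 * (1 - 2 * ε))
      = ε ^ 3 * (ε * (3 - 4 * ε) ^ 2) := by ring
    _ < ε ^ 3 * (2 * (1 - 2 * ε) ^ 2) := by gcongr
    _ = (2 * ε ^ 2) * ((1 - 2 * ε) ^ 2 * ε) := by ring
end

section
/- Let μ be a probability measure on {0,1}^n and f : {0,1}^n → ℝ. Suppose there is a coordinate l such that E[f | η_l = j, Σ_{i≠l} η_i = k] is weakly increasing in j and in k (over pairs (j,k) with positive probability). Then, with h(η) = Σ_{i≠l} η_i, E[f η_l] ≥ E[f]E[η_l] or E[f h] ≥ E[f]E[h]; in particular (f, μ) has a variable of positive influence: there exists i with E[f η_i] ≥ E[f]E[η_i]. -/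
open Finset


private lemma mul_nonneg_of_np {x y : ℝ} (hx : x ≤ 0) (hy : y ≤ 0) : 0 ≤ x * y := by
  nlinarith

private lemma core (N : ℕ) (q : Bool → ℕ → ℝ)
    (hmono : ∀ (j j' : Bool) (k k' : ℕ), j ≤ j' → k ≤ k' →
      0 < q j k → q j' k' < 0 → False)
    (hsum : ∑ j : Bool, ∑ k ∈ Finset.range N, q j k = 0)
    (hJ : ∑ k ∈ Finset.range N, q true k < 0) :
    0 < ∑ j : Bool, ∑ k ∈ Finset.range N, (k : ℝ) * q j k := by
  classical
  rw [Fintype.sum_bool] at hsum ⊢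
  have hF : 0 < ∑ k ∈ Finset.range N, q false k := by linarith
  have hex : ∃ k, 0 < q false k := by
    by_contra hcon
    push_neg at hcon
    exact absurd (Finset.sum_nonpos fun k _ => hcon k) (not_le.mpr hF)
  set T := Nat.find hex with hTdef
  have hT : 0 < q false T := Nat.find_spec hex
  have hTN : T < N := by
    by_contra hcon
    push_neg at hcon
    refine absurd (Finset.sum_nonpos fun k hk => ?_) (not_le.mpr hF)
    exact not_lt.mp (Nat.find_min hex (lt_of_lt_of_le (Finset.mem_range.mp hk) hcon))
  obtain ⟨S, hS1, hS2, hS3⟩ :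
      ∃ S : ℕ, (∀ k, 0 < q true k → S ≤ k) ∧ (∀ k, q true k < 0 → k < S) ∧ S ≤ T := by
    by_cases hA : ∃ k, 0 < q true k ∧ k < T
    · refine ⟨Nat.find hA, fun k hk => ?_, fun k hk => ?_, (Nat.find_spec hA).2.le⟩
      · by_contra hlt
        push_neg at hlt
        exact Nat.find_min hA hlt ⟨hk, hlt.trans (Nat.find_spec hA).2⟩
      · by_contra hle
        push_neg at hle
        exact hmono true true (Nat.find hA) k le_rfl hle (Nat.find_spec hA).1 hk
    · push_neg at hA
      refine ⟨T, hA, fun k hk => ?_, le_rfl⟩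
      by_contra hle
      push_neg at hle
      exact hmono false true T k (Bool.false_le true) hle hT hk
  have hw : ∀ (j : Bool) (k : ℕ),
      0 ≤ q j k * ((cond j ((T : ℝ) - (S : ℝ)) 0) + (k : ℝ) - ((T : ℝ) - 1/2)) := by
    intro j k
    rcases lt_trichotomy (q j k) 0 with hq | hq | hq
    · refine mul_nonneg_of_np hq.le ?_
      cases j with
      | false =>
        have hk : k < T := by
          by_contra hge
          push_neg at hge
          exact hmono false false T k le_rfl hge hT hq
        have hkT : (k : ℝ) + 1 ≤ (T : ℝ) := by exact_mod_cast hk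
        simp only [Bool.cond_false]
        linarith
      | true =>
        have hk : k < S := hS2 k hq
        have hkS : (k : ℝ) + 1 ≤ (S : ℝ) := by exact_mod_cast hk
        simp only [Bool.cond_true]
        linarith
    · rw [hq, zero_mul]
    · refine mul_nonneg hq.le ?_
      cases j with
      | false =>
        have hk : T ≤ k := not_lt.mp fun hlt => (Nat.find_min hex hlt) hq
        have hkT : (T : ℝ) ≤ (k : ℝ) := by exact_mod_cast hk
        simp only [Bool.cond_false]
        linarith
      | true =>
        have hk : S ≤ k := hS1 k hq
        have hkS : (S : ℝ) ≤ (k : ℝ) := by exact_mod_cast hk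
        simp only [Bool.cond_true]
        linarith
  have hsw : 0 < ∑ j : Bool, ∑ k ∈ Finset.range N, q j k *
      ((cond j ((T : ℝ) - (S : ℝ)) 0) + (k : ℝ) - ((T : ℝ) - 1/2)) := by
    refine Finset.sum_pos' (fun j _ => Finset.sum_nonneg fun k _ => hw j k)
      ⟨false, Finset.mem_univ _, ?_⟩
    refine Finset.sum_pos' (fun k _ => hw false k) ⟨T, Finset.mem_range.mpr hTN, ?_⟩
    simp only [Bool.cond_false]
    have hval : (0 : ℝ) + (T : ℝ) - ((T : ℝ) - 1/2) = 1/2 := by ring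
    rw [hval]
    linarith
  have hrow : ∀ (β : ℝ) (g : ℕ → ℝ),
      ∑ k ∈ Finset.range N, g k * (β + (k : ℝ) - ((T : ℝ) - 1/2))
        = β * (∑ k ∈ Finset.range N, g k) + (∑ k ∈ Finset.range N, (k : ℝ) * g k)
          - ((T : ℝ) - 1/2) * (∑ k ∈ Finset.range N, g k) := by
    intro β g
    rw [Finset.mul_sum, Finset.mul_sum, ← Finset.sum_add_distrib,
      ← Finset.sum_sub_distrib]
    exact Finset.sum_congr rfl fun k _ => by ring
  rw [Fintype.sum_bool] at hsw
  simp only [Bool.cond_true, Bool.cond_false] at hsw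
  rw [hrow ((T : ℝ) - (S : ℝ)) (q true), hrow 0 (q false)] at hsw
  have hα : (0 : ℝ) ≤ (T : ℝ) - (S : ℝ) := sub_nonneg.mpr (Nat.cast_le.mpr hS3)
  have hprod : ((T : ℝ) - (S : ℝ)) * (∑ k ∈ Finset.range N, q true k) ≤ 0 := by
    nlinarith
  have hBA : ∑ k ∈ Finset.range N, q false k = -∑ k ∈ Finset.range N, q true k := by
    linarith
  rw [hBA] at hsw
  linarith

theorem stmt_17 (n : ℕ) (μ : (Fin n → Bool) → ℝ)
    (hμ : ∀ η, 0 ≤ μ η) (hμ1 : ∑ η : Fin n → Bool, μ η = 1)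
    (f : (Fin n → Bool) → ℝ) (l : Fin n)
    (h : (Fin n → Bool) → ℕ)
    (hdef : ∀ η, h η = (univ.filter fun i => i ≠ l ∧ η i = true).card)
    (hmono : ∀ (j j' : Bool) (k k' : ℕ), j ≤ j' → k ≤ k' →
      0 < (∑ η : Fin n → Bool, if η l = j ∧ h η = k then μ η else 0) →
      0 < (∑ η : Fin n → Bool, if η l = j' ∧ h η = k' then μ η else 0) →
      (∑ η : Fin n → Bool, if η l = j ∧ h η = k then μ η * f η else 0) /
          (∑ η : Fin n → Bool, if η l = j ∧ h η = k then μ η else 0)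
        ≤ (∑ η : Fin n → Bool, if η l = j' ∧ h η = k' then μ η * f η else 0) /
          (∑ η : Fin n → Bool, if η l = j' ∧ h η = k' then μ η else 0)) :
    ((∑ η : Fin n → Bool, μ η * f η) *
          (∑ η : Fin n → Bool, if η l = true then μ η else 0)
        ≤ (∑ η : Fin n → Bool, if η l = true then μ η * f η else 0)
      ∨ (∑ η : Fin n → Bool, μ η * f η) * (∑ η : Fin n → Bool, μ η * (h η : ℝ))
        ≤ ∑ η : Fin n → Bool, μ η * f η * (h η : ℝ)) ∧
    ∃ i : Fin n, (∑ η : Fin n → Bool, μ η * f η) *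
          (∑ η : Fin n → Bool, if η i = true then μ η else 0)
        ≤ ∑ η : Fin n → Bool, if η i = true then μ η * f η else 0 := by
  have hcard : ∀ η : Fin n → Bool, h η < n + 1 := by
    intro η
    rw [hdef η]
    exact Nat.lt_succ_of_le ((Finset.card_filter_le _ _).trans (by simp))
  have hgroupη : ∀ (F : (Fin n → Bool) → ℝ) (η : Fin n → Bool),
      ∑ j : Bool, ∑ k ∈ Finset.range (n+1),
        (if η l = j ∧ h η = k then F η else 0) = F η := by
    intro F η
    rw [Fintype.sum_bool]
    have hmem : h η ∈ Finset.range (n+1) := Finset.mem_range.mpr (hcard η)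
    cases hb : η l with
    | false => simp [hb, Finset.sum_ite_eq, hmem]
    | true => simp [hb, Finset.sum_ite_eq, hmem]
  have hgroup : ∀ F : (Fin n → Bool) → ℝ,
      ∑ j : Bool, ∑ k ∈ Finset.range (n+1),
          ∑ η : Fin n → Bool, (if η l = j ∧ h η = k then F η else 0)
        = ∑ η : Fin n → Bool, F η := by
    intro F
    calc ∑ j : Bool, ∑ k ∈ Finset.range (n+1),
          ∑ η : Fin n → Bool, (if η l = j ∧ h η = k then F η else 0)
        = ∑ j : Bool, ∑ η : Fin n → Bool,
            ∑ k ∈ Finset.range (n+1), (if η l = j ∧ h η = k then F η else 0) :=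
          Finset.sum_congr rfl fun j _ => Finset.sum_comm
      _ = ∑ η : Fin n → Bool, ∑ j : Bool,
            ∑ k ∈ Finset.range (n+1), (if η l = j ∧ h η = k then F η else 0) :=
          Finset.sum_comm
      _ = ∑ η : Fin n → Bool, F η := Finset.sum_congr rfl fun η _ => hgroupη F η
  have hgroup1 : ∀ F : (Fin n → Bool) → ℝ,
      ∑ k ∈ Finset.range (n+1),
          ∑ η : Fin n → Bool, (if η l = true ∧ h η = k then F η else 0)
        = ∑ η : Fin n → Bool, (if η l = true then F η else 0) := by
    intro F
    rw [Finset.sum_comm]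
    refine Finset.sum_congr rfl fun η _ => ?_
    have hmem : h η ∈ Finset.range (n+1) := Finset.mem_range.mpr (hcard η)
    by_cases hb : η l = true
    · simp [hb, Finset.sum_ite_eq, hmem]
    · simp [hb]
  have hgroupk : ∀ F : (Fin n → Bool) → ℝ,
      ∑ j : Bool, ∑ k ∈ Finset.range (n+1),
          (k : ℝ) * ∑ η : Fin n → Bool, (if η l = j ∧ h η = k then F η else 0)
        = ∑ η : Fin n → Bool, F η * (h η : ℝ) := by
    intro F
    rw [← hgroup (fun η => F η * (h η : ℝ))]
    refine Finset.sum_congr rfl fun j _ => Finset.sum_congr rfl fun k _ => ?_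
    rw [Finset.mul_sum]
    refine Finset.sum_congr rfl fun η _ => ?_
    by_cases hcnd : η l = j ∧ h η = k
    · rw [if_pos hcnd, if_pos hcnd, ← hcnd.2]
      ring
    · rw [if_neg hcnd, if_neg hcnd, mul_zero]
  set a := ∑ η : Fin n → Bool, μ η * f η with ha
  have hpnn : ∀ (j : Bool) (k : ℕ),
      0 ≤ ∑ η : Fin n → Bool, (if η l = j ∧ h η = k then μ η else 0) := by
    intro j k
    refine Finset.sum_nonneg fun η _ => ?_
    by_cases hcnd : η l = j ∧ h η = k
    · rw [if_pos hcnd]; exact hμ η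
    · rw [if_neg hcnd]
  have hpm : ∀ (j : Bool) (k : ℕ),
      (∑ η : Fin n → Bool, (if η l = j ∧ h η = k then μ η else 0)) = 0 →
      (∑ η : Fin n → Bool, (if η l = j ∧ h η = k then μ η * f η else 0)) = 0 := by
    intro j k hp
    have hnn : ∀ η ∈ (Finset.univ : Finset (Fin n → Bool)),
        0 ≤ (if η l = j ∧ h η = k then μ η else 0) := by
      intro η _
      by_cases hcnd : η l = j ∧ h η = k
      · rw [if_pos hcnd]; exact hμ η
      · rw [if_neg hcnd]
    have h0 := (Finset.sum_eq_zero_iff_of_nonneg hnn).mp hp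
    refine Finset.sum_eq_zero fun η _ => ?_
    by_cases hcnd : η l = j ∧ h η = k
    · have hz := h0 η (Finset.mem_univ η)
      rw [if_pos hcnd] at hz
      rw [if_pos hcnd, hz, zero_mul]
    · rw [if_neg hcnd]
  have hrowsub : ∀ (g1 g2 : ℕ → ℝ),
      ∑ k ∈ Finset.range (n+1), (g1 k - a * g2 k)
        = (∑ k ∈ Finset.range (n+1), g1 k) - a * ∑ k ∈ Finset.range (n+1), g2 k := by
    intro g1 g2
    rw [Finset.mul_sum, ← Finset.sum_sub_distrib]
  have hrowk : ∀ (g1 g2 : ℕ → ℝ),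
      ∑ k ∈ Finset.range (n+1), (k : ℝ) * (g1 k - a * g2 k)
        = (∑ k ∈ Finset.range (n+1), (k : ℝ) * g1 k)
          - a * ∑ k ∈ Finset.range (n+1), (k : ℝ) * g2 k := by
    intro g1 g2
    rw [Finset.mul_sum, ← Finset.sum_sub_distrib]
    exact Finset.sum_congr rfl fun k _ => by ring
  have main : a * (∑ η : Fin n → Bool, if η l = true then μ η else 0)
        ≤ (∑ η : Fin n → Bool, if η l = true then μ η * f η else 0)
      ∨ a * (∑ η : Fin n → Bool, μ η * (h η : ℝ))
        < ∑ η : Fin n → Bool, μ η * f η * (h η : ℝ) := by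
    by_cases hc : a * (∑ η : Fin n → Bool, if η l = true then μ η else 0)
        ≤ ∑ η : Fin n → Bool, if η l = true then μ η * f η else 0
    · exact Or.inl hc
    right
    push_neg at hc
    have hqmono : ∀ (j j' : Bool) (k k' : ℕ), j ≤ j' → k ≤ k' →
        0 < (∑ η : Fin n → Bool, (if η l = j ∧ h η = k then μ η * f η else 0))
            - a * ∑ η : Fin n → Bool, (if η l = j ∧ h η = k then μ η else 0) →
        (∑ η : Fin n → Bool, (if η l = j' ∧ h η = k' then μ η * f η else 0))
            - a * (∑ η : Fin n → Bool, (if η l = j' ∧ h η = k' then μ η else 0)) < 0 →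
        False := by
      intro j j' k k' hj hk hq1 hq2
      have hp1 : 0 < ∑ η : Fin n → Bool, (if η l = j ∧ h η = k then μ η else 0) := by
        rcases (hpnn j k).lt_or_eq with hlt | heq
        · exact hlt
        · rw [hpm j k heq.symm, ← heq] at hq1
          simp at hq1
      have hp2 : 0 < ∑ η : Fin n → Bool, (if η l = j' ∧ h η = k' then μ η else 0) := by
        rcases (hpnn j' k').lt_or_eq with hlt | heq
        · exact hlt
        · rw [hpm j' k' heq.symm, ← heq] at hq2
          simp at hq2
      have hg := hmono j j' k k' hj hk hp1 hp2
      have hga : a < (∑ η : Fin n → Bool, (if η l = j ∧ h η = k then μ η * f η else 0))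
          / ∑ η : Fin n → Bool, (if η l = j ∧ h η = k then μ η else 0) :=
        (lt_div_iff₀ hp1).mpr (by linarith)
      have hga' : (∑ η : Fin n → Bool, (if η l = j' ∧ h η = k' then μ η * f η else 0))
          / (∑ η : Fin n → Bool, (if η l = j' ∧ h η = k' then μ η else 0)) < a :=
        (div_lt_iff₀ hp2).mpr (by linarith)
      linarith
    have hqsum : ∑ j : Bool, ∑ k ∈ Finset.range (n+1),
        ((∑ η : Fin n → Bool, (if η l = j ∧ h η = k then μ η * f η else 0))
          - a * ∑ η : Fin n → Bool, (if η l = j ∧ h η = k then μ η else 0)) = 0 := by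
      have h1 := hgroup (fun η => μ η * f η)
      have h2 := hgroup μ
      rw [hμ1] at h2
      rw [← ha] at h1
      rw [Fintype.sum_bool] at h1 h2 ⊢
      rw [hrowsub, hrowsub]
      have h2' : a * (∑ k ∈ Finset.range (n+1),
            ∑ η : Fin n → Bool, (if η l = true ∧ h η = k then μ η else 0))
          + a * (∑ k ∈ Finset.range (n+1),
            ∑ η : Fin n → Bool, (if η l = false ∧ h η = k then μ η else 0)) = a := by
        rw [← mul_add, h2, mul_one]
      linarith
    have hqJ : ∑ k ∈ Finset.range (n+1),
        ((∑ η : Fin n → Bool, (if η l = true ∧ h η = k then μ η * f η else 0))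
          - a * ∑ η : Fin n → Bool, (if η l = true ∧ h η = k then μ η else 0)) < 0 := by
      rw [hrowsub, hgroup1 (fun η => μ η * f η), hgroup1 μ]
      linarith
    have hcore := core (n+1)
      (fun j k => (∑ η : Fin n → Bool, (if η l = j ∧ h η = k then μ η * f η else 0))
        - a * ∑ η : Fin n → Bool, (if η l = j ∧ h η = k then μ η else 0))
      hqmono hqsum hqJ
    have h3 := hgroupk (fun η => μ η * f η)
    have h4 := hgroupk μ
    rw [Fintype.sum_bool] at h3 h4 hcore
    rw [hrowk, hrowk] at hcore
    have h4' : a * (∑ k ∈ Finset.range (n+1), (k : ℝ) *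
          ∑ η : Fin n → Bool, (if η l = true ∧ h η = k then μ η else 0))
        + a * (∑ k ∈ Finset.range (n+1), (k : ℝ) *
          ∑ η : Fin n → Bool, (if η l = false ∧ h η = k then μ η else 0))
        = a * ∑ η : Fin n → Bool, μ η * (h η : ℝ) := by
      rw [← mul_add, h4]
    linarith
  refine ⟨main.imp id le_of_lt, ?_⟩
  rcases main with hleft | hright
  · exact ⟨l, hleft⟩
  · have hdecomp : ∀ F : (Fin n → Bool) → ℝ,
        ∑ η : Fin n → Bool, F η * (h η : ℝ)
          = ∑ i ∈ Finset.univ.erase l,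
              ∑ η : Fin n → Bool, (if η i = true then F η else 0) := by
      intro F
      have hcomm : ∑ i ∈ Finset.univ.erase l,
            ∑ η : Fin n → Bool, (if η i = true then F η else 0)
          = ∑ η : Fin n → Bool, ∑ i ∈ Finset.univ.erase l,
              (if η i = true then F η else 0) := Finset.sum_comm
      rw [hcomm]
      refine Finset.sum_congr rfl fun η _ => ?_
      rw [← Finset.sum_filter, Finset.sum_const, nsmul_eq_mul]
      have hcards : ((Finset.univ.erase l).filter fun i => η i = true)
          = Finset.univ.filter fun i => i ≠ l ∧ η i = true := by
        ext i
        simp [Finset.mem_erase, Finset.mem_filter, and_comm]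
      rw [hcards, ← hdef η]
      ring
    have hsum' : 0 < ∑ i ∈ Finset.univ.erase l,
        ((∑ η : Fin n → Bool, if η i = true then μ η * f η else 0)
          - a * ∑ η : Fin n → Bool, if η i = true then μ η else 0) := by
      rw [Finset.sum_sub_distrib, ← Finset.mul_sum,
        ← hdecomp (fun η => μ η * f η), ← hdecomp μ]
      linarith
    obtain ⟨i, hi, hipos⟩ := Finset.exists_lt_of_sum_lt
      (s := Finset.univ.erase l) (f := fun _ => (0 : ℝ))
      (g := fun i => (∑ η : Fin n → Bool, if η i = true then μ η * f η else 0)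
        - a * ∑ η : Fin n → Bool, if η i = true then μ η else 0)
      (by rw [Finset.sum_const_zero]; exact hsum')
    exact ⟨i, by linarith⟩
end

section
/- Every probability measure μ on {0,1}^n that is invariant under all permutations of the coordinates {1,...,n−1} (i.e. almost exchangeable with special coordinate n), when restricted to the event {η_n = j, Σ_{i<n} η_i = k} for either j, agrees with the level-k conditional of a fixed product measure on {0,1}^{n−1} after imposing any strictly positive finite external field W; consequently, for any increasing event A, the function f = 1_A satisfies: E[f | η_n = j, Σ_{i<n} η_i = k] is weakly increasing in j and k. -/
/-!
Exchangeability in the first `n` coordinates makes `μ` constant on each event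
`{η_n = j, Σ_{i<n} η_i = k}`, so there the reweighted measure `W ∘ μ` is a constant multiple of
the product weight `∏_{i<n} W_i ^ η_i`; this is (1). By (1), the conditional probability of `A`
is the level-`k` conditional of the product measure of the slice `A_j = {ξ | (ξ, j) ∈ A}`. The
slices of an increasing event are increasing and grow with `j`, and for an increasing event `B`
the level-`k` conditional probability `ν_k(B)` grows with `k`: by induction on the number of
coordinates, splitting off the last one, where the induction step rests on the log-concavity
(Newton's inequality) of the level weights `Z_k = Σ_{|ξ| = k} ∏ W_i ^ ξ_i`.
-/

open Finset

/-- An event is increasing if it is closed upward in the coordinatewise order. -/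
def IncrEvent {m : ℕ} (A : Finset (Fin m → Bool)) : Prop :=
  ∀ η ∈ A, ∀ τ : Fin m → Bool, (∀ i, η i = true → τ i = true) → τ ∈ A

/-- Unnormalized weight of the product measure `ν(η) ∝ ∏ W i ^ η i`. -/
def prodWt {m : ℕ} (W : Fin m → ℝ) (η : Fin m → Bool) : ℝ :=
  ∏ i, if η i = true then W i else 1

/-- The external-field reweighting `W ∘ μ` (unnormalized). -/
def extFd {m : ℕ} (W : Fin m → ℝ) (μ : (Fin m → Bool) → ℝ) (η : Fin m → Bool) : ℝ :=
  μ η * prodWt W η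

/-- Number of `true` coordinates among the first `n` coordinates. -/
def lvlBelow {n : ℕ} (η : Fin (n + 1) → Bool) : ℕ :=
  (univ.filter fun i : Fin n => η i.castSucc = true).card

-- Indexed by `ℤ` so that `levelWeight_snoc` can refer to level `k - 1` without truncated
-- subtraction; it vanishes outside `[0, m]`.
noncomputable def levelWeight {m : ℕ} (w : Fin m → ℝ) (B : Finset (Fin m → Bool)) (k : ℤ) : ℝ :=
  ∑ ξ ∈ B, if (lvl ξ : ℤ) = k then prodWt w ξ else 0

def sliceLast {m : ℕ} (B : Finset (Fin (m + 1) → Bool)) (b : Bool) : Finset (Fin m → Bool) :=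
  {ξ | Fin.snoc ξ b ∈ B}

@[simp]
lemma mem_sliceLast {m : ℕ} {B : Finset (Fin (m + 1) → Bool)} {b : Bool} {ξ : Fin m → Bool} :
    ξ ∈ sliceLast B b ↔ Fin.snoc ξ b ∈ B := by
  simp [sliceLast]

@[simp]
lemma sliceLast_univ {m : ℕ} (b : Bool) :
    sliceLast (univ : Finset (Fin (m + 1) → Bool)) b = univ := by
  ext; simp

lemma lvl_le {m : ℕ} (ξ : Fin m → Bool) : lvl ξ ≤ m :=
  (card_filter_le _ _).trans_eq (card_fin m)

lemma exists_lvl_eq {m k : ℕ} (hk : k ≤ m) : ∃ ξ : Fin m → Bool, lvl ξ = k := by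
  obtain ⟨s, -, hs⟩ := exists_subset_card_eq (s := (univ : Finset (Fin m))) (by simpa using hk)
  exact ⟨fun i => decide (i ∈ s), by simp [lvl, hs]⟩

@[simp]
lemma lvl_snoc {m : ℕ} (ξ : Fin m → Bool) (b : Bool) :
    lvl (Fin.snoc ξ b : Fin (m + 1) → Bool) = lvl ξ + if b = true then 1 else 0 := by
  rw [lvl, lvl, card_filter, card_filter, Fin.sum_univ_castSucc]
  simp

@[simp]
lemma lvlBelow_snoc {m : ℕ} (ξ : Fin m → Bool) (b : Bool) :
    lvlBelow (Fin.snoc ξ b : Fin (m + 1) → Bool) = lvl ξ := by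
  simp [lvlBelow, lvl]

lemma prodWt_snoc {m : ℕ} (w : Fin (m + 1) → ℝ) (ξ : Fin m → Bool) (b : Bool) :
    prodWt w (Fin.snoc ξ b) =
      prodWt (fun i => w i.castSucc) ξ * if b = true then w (Fin.last m) else 1 := by
  simp [prodWt, Fin.prod_univ_castSucc]

lemma sum_eq_sum_sliceLast {β : Type*} [AddCommMonoid β] {m : ℕ} (B : Finset (Fin (m + 1) → Bool))
    (f : (Fin (m + 1) → Bool) → β) :
    ∑ η ∈ B, f η = ∑ b : Bool, ∑ ξ ∈ sliceLast B b, f (Fin.snoc ξ b) := by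
  rw [← univ_inter B, ← sum_ite_mem]
  simp only [sliceLast, sum_filter]
  rw [← Fintype.sum_prod_type', ← (Fin.snocEquiv fun _ => Bool).sum_comp, univ_inter]
  rfl

section ProductMeasure

variable {m : ℕ} {w : Fin m → ℝ}

lemma prodWt_pos (hw : ∀ i, 0 < w i) (ξ : Fin m → Bool) : 0 < prodWt w ξ :=
  prod_pos fun i _ => by split_ifs <;> simp [hw i]

lemma levelWeight_nonneg (hw : ∀ i, 0 < w i) (B : Finset (Fin m → Bool)) (k : ℤ) :
    0 ≤ levelWeight w B k :=
  sum_nonneg fun ξ _ => by split_ifs <;> simp [(prodWt_pos hw ξ).le]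

lemma levelWeight_mono (hw : ∀ i, 0 < w i) {B C : Finset (Fin m → Bool)} (h : B ⊆ C) (k : ℤ) :
    levelWeight w B k ≤ levelWeight w C k :=
  sum_le_sum_of_subset_of_nonneg h fun ξ _ _ => by split_ifs <;> simp [(prodWt_pos hw ξ).le]

lemma levelWeight_of_neg (B : Finset (Fin m → Bool)) {k : ℤ} (hk : k < 0) :
    levelWeight w B k = 0 :=
  sum_eq_zero fun ξ _ => if_neg (by omega)

lemma levelWeight_of_lt (B : Finset (Fin m → Bool)) {k : ℤ} (hk : (m : ℤ) < k) :
    levelWeight w B k = 0 :=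
  sum_eq_zero fun ξ _ => if_neg (by have := lvl_le ξ; omega)

lemma levelWeight_univ_pos (hw : ∀ i, 0 < w i) {k : ℤ} (h0 : 0 ≤ k) (hm : k ≤ m) :
    0 < levelWeight w univ k := by
  obtain ⟨ξ, hξ⟩ := exists_lvl_eq (m := m) (k := k.toNat) (by omega)
  refine sum_pos' (fun ζ _ => by split_ifs <;> simp [(prodWt_pos hw ζ).le]) ⟨ξ, mem_univ _, ?_⟩
  rw [if_pos (by omega)]
  exact prodWt_pos hw ξ

end ProductMeasure

lemma levelWeight_snoc {m : ℕ} (w : Fin (m + 1) → ℝ) (B : Finset (Fin (m + 1) → Bool)) (k : ℤ) :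
    levelWeight w B k = levelWeight (fun i => w i.castSucc) (sliceLast B false) k
      + w (Fin.last m) * levelWeight (fun i => w i.castSucc) (sliceLast B true) (k - 1) := by
  rw [levelWeight, sum_eq_sum_sliceLast, Fintype.sum_bool, add_comm, levelWeight, levelWeight,
    mul_sum]
  congr 1 <;> refine sum_congr rfl fun ξ _ => ?_ <;> simp [prodWt_snoc]
  split_ifs <;> first | ring1 | (exfalso; omega)

lemma levelWeight_univ_mul_le_sq {m : ℕ} {w : Fin m → ℝ} (hw : ∀ i, 0 < w i) (k : ℤ) :
    levelWeight w univ (k - 1) * levelWeight w univ (k + 1) ≤ levelWeight w univ k ^ 2 := by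
  induction m generalizing k with
  | zero =>
    rcases le_or_gt k 0 with hk | hk
    · rw [levelWeight_of_neg univ (by omega), zero_mul]; positivity
    · rw [levelWeight_of_lt univ (by omega : ((0 : ℕ) : ℤ) < k + 1), mul_zero]; positivity
  | succ m ih =>
    set a := levelWeight (fun i : Fin m => w i.castSucc) univ
    have hw' : ∀ i : Fin m, 0 < w i.castSucc := fun i => hw _
    have ha : ∀ j, 0 ≤ a j := levelWeight_nonneg hw' univ
    have e1 : a (k - 1) * a (k + 1) ≤ a k ^ 2 := ih hw' k
    have e2 : a (k - 2) * a k ≤ a (k - 1) ^ 2 := by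
      simpa [show k - 1 - 1 = k - 2 by ring] using ih hw' (k - 1)
    -- log-concavity without internal zeros lets the outer pair be dominated by the inner one
    have hinter : a (k - 2) * a (k + 1) ≤ a (k - 1) * a k := by
      by_cases hin : 0 ≤ k - 1 ∧ k ≤ m
      · have h1 : 0 < a (k - 1) := levelWeight_univ_pos hw' hin.1 (by omega)
        have h2 : 0 < a k := levelWeight_univ_pos hw' (by omega) hin.2
        nlinarith [mul_le_mul e1 e2 (mul_nonneg (ha _) (ha _)) (sq_nonneg _), mul_pos h1 h2]
      · rcases not_and_or.mp hin with hk | hk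
        · have h0 : a (k - 2) = 0 := levelWeight_of_neg univ (by omega)
          rw [h0, zero_mul]
          exact mul_nonneg (ha _) (ha _)
        · have h0 : a (k + 1) = 0 := levelWeight_of_lt univ (by omega)
          rw [h0, mul_zero]
          exact mul_nonneg (ha _) (ha _)
    have hwl := (hw (Fin.last m)).le
    simp only [levelWeight_snoc w univ, sliceLast_univ]
    rw [show k - 1 - 1 = k - 2 by ring, add_sub_cancel_right]
    nlinarith [mul_le_mul_of_nonneg_left hinter hwl,
      mul_le_mul_of_nonneg_left e2 (mul_nonneg hwl hwl)]

lemma incrEvent_sliceLast {m : ℕ} {B : Finset (Fin (m + 1) → Bool)} (hB : IncrEvent B) (b : Bool) :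
    IncrEvent (sliceLast B b) := by
  intro ξ hξ τ hτ
  rw [mem_sliceLast] at *
  refine hB _ hξ _ fun i => Fin.lastCases ?_ (fun j => ?_) i
  · simp
  · simpa using hτ j

lemma monotone_sliceLast {m : ℕ} {B : Finset (Fin (m + 1) → Bool)} (hB : IncrEvent B) :
    Monotone (sliceLast B) := by
  intro b b' hb ξ hξ
  rw [mem_sliceLast] at *
  refine hB _ hξ _ fun i => Fin.lastCases ?_ (fun j => ?_) i
  · simpa using Bool.le_iff_imp.mp hb
  · simp

lemma levelWeight_mul_le_succ {m : ℕ} {w : Fin m → ℝ} (hw : ∀ i, 0 < w i)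
    {B : Finset (Fin m → Bool)} (hB : IncrEvent B) (k : ℤ) :
    levelWeight w B k * levelWeight w univ (k + 1)
      ≤ levelWeight w B (k + 1) * levelWeight w univ k := by
  induction m generalizing k with
  | zero =>
    rcases lt_or_ge k 0 with hk | hk
    · rw [levelWeight_of_neg B hk, zero_mul]
      exact mul_nonneg (levelWeight_nonneg hw _ _) (levelWeight_nonneg hw _ _)
    · rw [levelWeight_of_lt univ (by omega : ((0 : ℕ) : ℤ) < k + 1), mul_zero]
      exact mul_nonneg (levelWeight_nonneg hw _ _) (levelWeight_nonneg hw _ _)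
  | succ m ih =>
    have hw' : ∀ i : Fin m, 0 < w i.castSucc := fun i => hw _
    set w' : Fin m → ℝ := fun i => w i.castSucc
    set a := levelWeight w' univ
    set b := levelWeight w' (sliceLast B true)
    set c := levelWeight w' (sliceLast B false)
    have hnn : ∀ C j, 0 ≤ levelWeight w' C j := levelWeight_nonneg hw'
    have hc := ih hw' (incrEvent_sliceLast hB false) k
    have hb := ih hw' (incrEvent_sliceLast hB true) (k - 1)
    rw [sub_add_cancel] at hb
    -- after multiplying by `a k`, the two induction hypotheses reduce this to
    -- `(b k - c k) * (a k ^ 2 - a (k - 1) * a (k + 1)) ≥ 0`, i.e. to Newton's inequality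
    have hmid : c k * a k + b (k - 1) * a (k + 1) ≤ c (k + 1) * a (k - 1) + b k * a k := by
      by_cases hin : 0 ≤ k ∧ k ≤ m
      · have hak : 0 < a k := levelWeight_univ_pos hw' hin.1 hin.2
        have hcb : c k ≤ b k := levelWeight_mono hw' (monotone_sliceLast hB (Bool.false_le true)) k
        have hN := levelWeight_univ_mul_le_sq hw' k
        refine le_of_mul_le_mul_right ?_ hak
        nlinarith [mul_le_mul_of_nonneg_right hb (hnn univ (k + 1)),
          mul_le_mul_of_nonneg_right hc (hnn univ (k - 1)),
          mul_nonneg (sub_nonneg.2 hcb) (sub_nonneg.2 hN)]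
      · have hck : c k = 0 := by
          rcases not_and_or.mp hin with hk | hk
          · exact levelWeight_of_neg _ (by omega)
          · exact levelWeight_of_lt _ (by omega)
        have hout : b (k - 1) * a (k + 1) = 0 := by
          rcases not_and_or.mp hin with hk | hk
          · rw [show b (k - 1) = 0 from levelWeight_of_neg _ (by omega), zero_mul]
          · rw [show a (k + 1) = 0 from levelWeight_of_lt _ (by omega), mul_zero]
        rw [hck, hout, zero_mul, zero_add]
        exact add_nonneg (mul_nonneg (hnn _ _) (hnn _ _)) (mul_nonneg (hnn _ _) (hnn _ _))
    have hwl := (hw (Fin.last m)).le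
    simp only [levelWeight_snoc w _ (_ + 1), levelWeight_snoc w _ k, sliceLast_univ,
      add_sub_cancel_right]
    nlinarith [mul_le_mul_of_nonneg_left hmid hwl,
      mul_le_mul_of_nonneg_left hb (mul_nonneg hwl hwl)]

lemma monotoneOn_levelWeight_div {m : ℕ} {w : Fin m → ℝ} (hw : ∀ i, 0 < w i)
    {B : Finset (Fin m → Bool)} (hB : IncrEvent B) :
    MonotoneOn (fun k => levelWeight w B k / levelWeight w univ k) (Set.Icc 0 m) := by
  refine monotoneOn_of_le_add_one Set.ordConnected_Icc fun k _ hk hk1 => ?_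
  rw [div_le_div_iff₀ (levelWeight_univ_pos hw hk.1 hk.2) (levelWeight_univ_pos hw hk1.1 hk1.2)]
  exact levelWeight_mul_le_succ hw hB k

lemma exists_perm_comp_eq {m : ℕ} {ξ ξ' : Fin m → Bool} (h : lvl ξ = lvl ξ') :
    ∃ σ : Equiv.Perm (Fin m), ξ ∘ σ = ξ' := by
  have hcard : ∀ b, Fintype.card {i // ξ' i = b} = Fintype.card {i // ξ i = b} := by
    have htrue : Fintype.card {i // ξ' i = true} = Fintype.card {i // ξ i = true} := by
      simpa [Fintype.card_subtype, lvl] using h.symm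
    rintro (_ | _)
    · simp_rw [← Bool.not_eq_true]
      rw [Fintype.card_subtype_compl, Fintype.card_subtype_compl, htrue]
    · exact htrue
  exact ⟨Equiv.ofFiberEquiv fun b => Fintype.equivOfCardEq (hcard b),
    funext (Equiv.ofFiberEquiv_map _)⟩

def ExchangeableExceptLast {α : Type*} {n : ℕ} (μ : (Fin (n + 1) → Bool) → α) : Prop :=
  ∀ σ : Equiv.Perm (Fin (n + 1)), σ (Fin.last n) = Fin.last n →
    ∀ η : Fin (n + 1) → Bool, μ (η ∘ σ) = μ η

lemma apply_snoc_eq_of_lvl_eq {α : Type*} {n : ℕ} {μ : (Fin (n + 1) → Bool) → α}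
    (hsym : ExchangeableExceptLast μ)
    (j : Bool) {ξ ξ' : Fin n → Bool} (h : lvl ξ = lvl ξ') :
    μ (Fin.snoc ξ j) = μ (Fin.snoc ξ' j) := by
  obtain ⟨σ, rfl⟩ := exists_perm_comp_eq h
  let τ : Equiv.Perm (Fin (n + 1)) := finSuccEquivLast.symm.permCongr σ.optionCongr
  have hτ : (Fin.snoc ξ j : Fin (n + 1) → Bool) ∘ τ = Fin.snoc (ξ ∘ σ) j := by
    funext i
    induction i using Fin.lastCases <;>
      simp [τ, Equiv.permCongr_apply, finSuccEquivLast_castSucc, finSuccEquivLast_symm_some]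
  rw [← hτ, hsym τ (by simp [τ, Equiv.permCongr_apply])]

lemma extFd_snoc {m : ℕ} (W : Fin (m + 1) → ℝ) (μ : (Fin (m + 1) → Bool) → ℝ)
    (ξ : Fin m → Bool) (b : Bool) :
    extFd W μ (Fin.snoc ξ b) = μ (Fin.snoc ξ b) * (if b = true then W (Fin.last m) else 1)
      * prodWt (fun i => W i.castSucc) ξ := by
  rw [extFd, prodWt_snoc]
  ring

lemma sum_extFd_eq_mul_levelWeight {n : ℕ} {μ : (Fin (n + 1) → Bool) → ℝ}
    (hsym : ExchangeableExceptLast μ)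
    (W : Fin (n + 1) → ℝ) (E : Finset (Fin (n + 1) → Bool)) (j : Bool) {k : ℕ}
    {ξ₀ : Fin n → Bool} (h₀ : lvl ξ₀ = k) :
    ∑ η ∈ E, (if η (Fin.last n) = j ∧ lvlBelow η = k then extFd W μ η else 0)
      = μ (Fin.snoc ξ₀ j) * (if j = true then W (Fin.last n) else 1)
        * levelWeight (fun i => W i.castSucc) (sliceLast E j) k := by
  rw [sum_eq_sum_sliceLast, Fintype.sum_eq_single j fun b hb => sum_eq_zero fun ξ _ => by simp [hb],
    levelWeight, mul_sum]
  refine sum_congr rfl fun ξ _ => ?_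
  by_cases hξ : lvl ξ = k
  · simp [hξ, extFd_snoc, apply_snoc_eq_of_lvl_eq hsym j (hξ.trans h₀.symm)]
  · simp [hξ]

lemma div_sum_extFd_eq {n : ℕ} {μ : (Fin (n + 1) → Bool) → ℝ}
    (hsym : ExchangeableExceptLast μ)
    (W : Fin (n + 1) → ℝ) (E : Finset (Fin (n + 1) → Bool)) {j : Bool} {k : ℕ}
    (hpos : 0 < ∑ η : Fin (n + 1) → Bool,
      if η (Fin.last n) = j ∧ lvlBelow η = k then extFd W μ η else 0)
    {ξ₀ : Fin n → Bool} (h₀ : lvl ξ₀ = k) :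
    (∑ η ∈ E, if η (Fin.last n) = j ∧ lvlBelow η = k then extFd W μ η else 0) /
        (∑ η : Fin (n + 1) → Bool, if η (Fin.last n) = j ∧ lvlBelow η = k then extFd W μ η else 0)
      = levelWeight (fun i => W i.castSucc) (sliceLast E j) k
        / levelWeight (fun i => W i.castSucc) univ k := by
  have hD := sum_extFd_eq_mul_levelWeight hsym W univ j h₀
  rw [sliceLast_univ] at hD
  rw [hD] at hpos ⊢
  rw [sum_extFd_eq_mul_levelWeight hsym W E j h₀,
    mul_div_mul_left _ _ (left_ne_zero_of_mul hpos.ne')]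

lemma exists_lvl_eq_of_sum_pos {n : ℕ} {f : (Fin (n + 1) → Bool) → ℝ} {j : Bool} {k : ℕ}
    (hpos : 0 < ∑ η : Fin (n + 1) → Bool,
      if η (Fin.last n) = j ∧ lvlBelow η = k then f η else 0) :
    ∃ ξ : Fin n → Bool, lvl ξ = k := by
  obtain ⟨η, -, hη⟩ := exists_ne_zero_of_sum_ne_zero hpos.ne'
  exact ⟨Fin.init η, (ite_ne_right_iff.mp hη).1.2⟩

theorem stmt_18_general (n : ℕ) (μ : (Fin (n + 1) → Bool) → ℝ)
    (hsym : ∀ σ : Equiv.Perm (Fin (n + 1)), σ (Fin.last n) = Fin.last n →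
      ∀ η : Fin (n + 1) → Bool, μ (η ∘ σ) = μ η)
    (W : Fin (n + 1) → ℝ) (hW : ∀ i, 0 < W i) :
    -- (1) conditioned on `{η_n = j, Σ_{i<n} η_i = k}`, the field-adjusted measure
    -- agrees with the level-`k` conditional of the product measure with weights
    -- `W_0, ..., W_{n-1}` (for either value of `j`):
    (∀ (j : Bool) (k : ℕ) (ξ : Fin n → Bool), lvl ξ = k →
      0 < (∑ η : Fin (n + 1) → Bool,
            if η (Fin.last n) = j ∧ lvlBelow η = k then extFd W μ η else 0) →
      extFd W μ (Fin.snoc ξ j) /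
          (∑ η : Fin (n + 1) → Bool,
            if η (Fin.last n) = j ∧ lvlBelow η = k then extFd W μ η else 0)
        = prodWt (fun i : Fin n => W i.castSucc) ξ /
          (∑ ζ : Fin n → Bool,
            if lvl ζ = k then prodWt (fun i : Fin n => W i.castSucc) ζ else 0)) ∧
    -- (2) consequently, for every increasing event `A`, the conditional expectation
    -- of `1_A` given `{η_n = j, Σ_{i<n} η_i = k}` is weakly increasing in `j` and `k`:
    (∀ A : Finset (Fin (n + 1) → Bool), IncrEvent A →
      ∀ (j j' : Bool) (k k' : ℕ), j ≤ j' → k ≤ k' →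
      0 < (∑ η : Fin (n + 1) → Bool,
            if η (Fin.last n) = j ∧ lvlBelow η = k then extFd W μ η else 0) →
      0 < (∑ η : Fin (n + 1) → Bool,
            if η (Fin.last n) = j' ∧ lvlBelow η = k' then extFd W μ η else 0) →
      (∑ η ∈ A, if η (Fin.last n) = j ∧ lvlBelow η = k then extFd W μ η else 0) /
          (∑ η : Fin (n + 1) → Bool,
            if η (Fin.last n) = j ∧ lvlBelow η = k then extFd W μ η else 0)
        ≤ (∑ η ∈ A, if η (Fin.last n) = j' ∧ lvlBelow η = k' then extFd W μ η else 0) /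
          (∑ η : Fin (n + 1) → Bool,
            if η (Fin.last n) = j' ∧ lvlBelow η = k' then extFd W μ η else 0)) := by
  set w : Fin n → ℝ := fun i => W i.castSucc
  have hw : ∀ i, 0 < w i := fun i => hW _
  refine ⟨fun j k ξ hξ hpos => ?_, fun A hA j j' k k' hj hk hpos hpos' => ?_⟩
  · have hD := sum_extFd_eq_mul_levelWeight hsym W univ j hξ
    rw [sliceLast_univ] at hD
    rw [hD] at hpos ⊢
    have hZ : (∑ ζ : Fin n → Bool, if lvl ζ = k then prodWt w ζ else 0) = levelWeight w univ k := by
      simp [levelWeight]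
    rw [hZ, extFd_snoc, mul_div_mul_left _ _ (left_ne_zero_of_mul hpos.ne')]
  · obtain ⟨ξ, hξ⟩ := exists_lvl_eq_of_sum_pos hpos
    obtain ⟨ξ', hξ'⟩ := exists_lvl_eq_of_sum_pos hpos'
    have hk' : k' ≤ n := hξ' ▸ lvl_le ξ'
    rw [div_sum_extFd_eq hsym W A hpos hξ, div_sum_extFd_eq hsym W A hpos' hξ']
    calc levelWeight w (sliceLast A j) k / levelWeight w univ k
        ≤ levelWeight w (sliceLast A j') k / levelWeight w univ k :=
          div_le_div_of_nonneg_right (levelWeight_mono hw (monotone_sliceLast hA hj) k)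
            (levelWeight_nonneg hw univ k)
      _ ≤ levelWeight w (sliceLast A j') k' / levelWeight w univ k' :=
          monotoneOn_levelWeight_div hw (incrEvent_sliceLast hA j') ⟨by omega, by omega⟩
            ⟨by omega, by omega⟩ (by exact_mod_cast hk)

theorem stmt_18 (n : ℕ) (μ : (Fin (n + 1) → Bool) → ℝ)
    (hμ : ∀ η, 0 ≤ μ η) (hμ1 : ∑ η : Fin (n + 1) → Bool, μ η = 1)
    (hsym : ∀ σ : Equiv.Perm (Fin (n + 1)), σ (Fin.last n) = Fin.last n →
      ∀ η : Fin (n + 1) → Bool, μ (η ∘ σ) = μ η)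
    (W : Fin (n + 1) → ℝ) (hW : ∀ i, 0 < W i) :
    -- (1) conditioned on `{η_n = j, Σ_{i<n} η_i = k}`, the field-adjusted measure
    -- agrees with the level-`k` conditional of the product measure with weights
    -- `W_0, ..., W_{n-1}` (for either value of `j`):
    (∀ (j : Bool) (k : ℕ) (ξ : Fin n → Bool), lvl ξ = k →
      0 < (∑ η : Fin (n + 1) → Bool,
            if η (Fin.last n) = j ∧ lvlBelow η = k then extFd W μ η else 0) →
      extFd W μ (Fin.snoc ξ j) /
          (∑ η : Fin (n + 1) → Bool,
            if η (Fin.last n) = j ∧ lvlBelow η = k then extFd W μ η else 0)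
        = prodWt (fun i : Fin n => W i.castSucc) ξ /
          (∑ ζ : Fin n → Bool,
            if lvl ζ = k then prodWt (fun i : Fin n => W i.castSucc) ζ else 0)) ∧
    -- (2) consequently, for every increasing event `A`, the conditional expectation
    -- of `1_A` given `{η_n = j, Σ_{i<n} η_i = k}` is weakly increasing in `j` and `k`:
    (∀ A : Finset (Fin (n + 1) → Bool), IncrEvent A →
      ∀ (j j' : Bool) (k k' : ℕ), j ≤ j' → k ≤ k' →
      0 < (∑ η : Fin (n + 1) → Bool,
            if η (Fin.last n) = j ∧ lvlBelow η = k then extFd W μ η else 0) →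
      0 < (∑ η : Fin (n + 1) → Bool,
            if η (Fin.last n) = j' ∧ lvlBelow η = k' then extFd W μ η else 0) →
      (∑ η ∈ A, if η (Fin.last n) = j ∧ lvlBelow η = k then extFd W μ η else 0) /
          (∑ η : Fin (n + 1) → Bool,
            if η (Fin.last n) = j ∧ lvlBelow η = k then extFd W μ η else 0)
        ≤ (∑ η ∈ A, if η (Fin.last n) = j' ∧ lvlBelow η = k' then extFd W μ η else 0) /
          (∑ η : Fin (n + 1) → Bool,
            if η (Fin.last n) = j' ∧ lvlBelow η = k' then extFd W μ η else 0)) :=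
  stmt_18_general n μ hsym W hW
end
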